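/- arXiv:1508.01464 — 6 statements merged into one kernel-verified Lean document; each statement's English description precedes it below -/
import Mathlib

section
/- For every fixed 0 ≤ ε ≤ 1/2, Mrs. Gerber's function x ↦ φ(x,ε) is concave on [0,1]. -/
open Finset

/-- The boolean cube `{0,1}^n`. -/
abbrev Cube (n : ℕ) := Fin n → Bool

/-- Expectation over a uniform point of the cube. -/
noncomputable def EX {n : ℕ} (f : Cube n → ℝ) : ℝ :=
  (∑ x : Cube n, f x) / (2 ^ n : ℝ)

/-- The entropy functional `Ent(f) = E f log₂ f - (E f) log₂ (E f)`. -/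
noncomputable def Ent {n : ℕ} (f : Cube n → ℝ) : ℝ :=
  EX (fun x => f x * Real.logb 2 (f x)) - EX f * Real.logb 2 (EX f)

/-- The noise operator `T_ε`. -/
noncomputable def noiseOp {n : ℕ} (ε : ℝ) (f : Cube n → ℝ) : Cube n → ℝ :=
  fun x => ∑ y : Cube n, ε ^ (hammingDist y x) * (1 - ε) ^ (n - hammingDist y x) * f y

/-- Binary entropy function (base 2). -/
noncomputable def H2 (x : ℝ) : ℝ :=
  -(x * Real.logb 2 x) - (1 - x) * Real.logb 2 (1 - x)

/-- The inverse of the binary entropy function, `H₂⁻¹ : [0,1] → [0,1/2]`. -/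
noncomputable def H2inv (y : ℝ) : ℝ :=
  Function.invFunOn H2 (Set.Icc 0 (1 / 2)) y

/-- Mrs. Gerber's function `φ(x, ε)`. -/
noncomputable def phi (x ε : ℝ) : ℝ :=
  1 - H2 ((1 - 2 * ε) * H2inv (1 - x) + ε)

/-- Conditional expectation of `f` given the coordinates in `A`,
viewed as a function on the cube depending only on coordinates in `A`. -/
noncomputable def condE {n : ℕ} (f : Cube n → ℝ) (A : Finset (Fin n)) : Cube n → ℝ :=
  fun x => (∑ z : Cube n, f (fun i => if i ∈ A then x i else z i)) / (2 ^ n : ℝ)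

/-- `Ent(f | A) = Ent(E(f | A))`. -/
noncomputable def EntC {n : ℕ} (f : Cube n → ℝ) (A : Finset (Fin n)) : ℝ :=
  Ent (condE f A)

/-- Expectation over a random subset `T ⊆ [n]` obtained by including each element
independently with probability `l`. -/
noncomputable def ETsub {n : ℕ} (l : ℝ) (g : Finset (Fin n) → ℝ) : ℝ :=
  ∑ T : Finset (Fin n), l ^ T.card * (1 - l) ^ (n - T.card) * g T


/-- Marginal of a distribution `p` on the cube on the coordinates in `T`
(as a function on the cube, depending only on the coordinates in `T`). -/
noncomputable def marg {n : ℕ} (p : Cube n → ℝ) (T : Finset (Fin n)) (x : Cube n) : ℝ :=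
  ∑ y : Cube n, if ∀ i ∈ T, y i = x i then p y else 0

/-- Shannon entropy (base 2) of the marginal of `p` on the coordinates in `T`:
the sum goes over canonical representatives (coordinates outside `T` set to `false`). -/
noncomputable def margEnt {n : ℕ} (p : Cube n → ℝ) (T : Finset (Fin n)) : ℝ :=
  -∑ x : Cube n,
      if ∀ i ∉ T, x i = false then marg p T x * Real.logb 2 (marg p T x) else 0

/-- Shannon entropy (base 2) of a probability distribution on the cube. -/
noncomputable def shEnt {n : ℕ} (p : Cube n → ℝ) : ℝ :=
  -∑ y : Cube n, p y * Real.logb 2 (p y)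

/-- Walsh function `W_S(x) = (-1)^{∑_{i ∈ S} x_i}`. -/
def walsh {n : ℕ} (S : Finset (Fin n)) (x : Cube n) : ℝ :=
  ∏ i ∈ S, (if x i then (-1 : ℝ) else 1)

/-- Walsh–Fourier coefficient `f̂(S) = E_x f(x) W_S(x)`. -/
noncomputable def fourierCoef {n : ℕ} (f : Cube n → ℝ) (S : Finset (Fin n)) : ℝ :=
  EX (fun x => f x * walsh S x)

/-- The noise operator `T_{ε,R}` acting only in the directions in `R`
(the composition of the directional noise operators `T_{ε,i}`, `i ∈ R`). -/
noncomputable def noiseOpOn {n : ℕ} (ε : ℝ) (R : Finset (Fin n)) (g : Cube n → ℝ) :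
    Cube n → ℝ :=
  fun x => ∑ y : Cube n,
    (if ∀ i ∉ R, y i = x i then ∏ i ∈ R, (if y i = x i then 1 - ε else ε) else 0) * g y

/-- `I_g(A,m) = Ent(g | A ∪ {m}) - Ent(g | A) - Ent(g | {m})`. -/
noncomputable def Ifun {n : ℕ} (g : Cube n → ℝ) (A : Finset (Fin n)) (m : Fin n) : ℝ :=
  EntC g (insert m A) - EntC g A - EntC g {m}

/-- `Z_{S;i,j}(f) = Ent(f|S∪{i,j}) - Ent(f|S∪{i}) - Ent(f|S∪{j}) + Ent(f|S)`. -/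
noncomputable def Zfun {n : ℕ} (f : Cube n → ℝ) (S : Finset (Fin n)) (i j : Fin n) : ℝ :=
  EntC f (insert i (insert j S)) - EntC f (insert i S) - EntC f (insert j S) + EntC f S

/-- `Y(A,m,s)`: the average of `Z_{S;i,m}(f)` over subsets `S ⊆ A` with `|S| = s - 1`
and over `i ∈ A \ S`. -/
noncomputable def Yavg {n : ℕ} (f : Cube n → ℝ) (A : Finset (Fin n)) (m : Fin n) (s : ℕ) : ℝ :=
  (∑ S ∈ A.powerset.filter (fun S => S.card = s - 1), ∑ i ∈ A \ S, Zfun f S i m) /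
    (∑ S ∈ A.powerset.filter (fun S => S.card = s - 1), ((A \ S).card : ℝ))

/-- `Λ(k,s,λ) = 1 - ∑_{j=0}^{s-1} C(k,j) λ^j (1-λ)^{k-j}`. -/
noncomputable def Lam (k s : ℕ) (l : ℝ) : ℝ :=
  1 - ∑ j ∈ Finset.range s, (Nat.choose k j : ℝ) * l ^ j * (1 - l) ^ (k - j)

/-- `t_s`: the average of `Z_{S;i,j}(f)` over subsets `S ⊆ [n]` with `|S| = s - 1`
and over distinct `i, j ∉ S`. -/
noncomputable def tAvg {n : ℕ} (f : Cube n → ℝ) (s : ℕ) : ℝ :=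
  (∑ S ∈ (Finset.univ : Finset (Finset (Fin n))).filter (fun S => S.card = s - 1),
      ∑ i ∈ Sᶜ, ∑ j ∈ Sᶜ \ {i}, Zfun f S i j) /
    (∑ S ∈ (Finset.univ : Finset (Finset (Fin n))).filter (fun S => S.card = s - 1),
      ∑ i ∈ Sᶜ, ((Sᶜ \ {i}).card : ℝ))

/-- The entropy functional on an arbitrary finite set with uniform measure. -/
noncomputable def entFin {α : Type*} [Fintype α] (g : α → ℝ) : ℝ :=
  (∑ a, g a * Real.logb 2 (g a)) / (Fintype.card α : ℝ) -
    ((∑ a, g a) / (Fintype.card α : ℝ)) * Real.logb 2 ((∑ a, g a) / (Fintype.card α : ℝ))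

/-!
Write `t = H₂⁻¹(1 - x)`, `q = t ⋆ ε = (1 - 2ε) t + ε` and `L(p) = log ((1 - p) / p)`, so that
`H₂' = L / log 2`. By the inverse function rule `∂φ/∂x = (1 - 2ε) L(q) / L(t)`, and since `t`
decreases with `x`, concavity amounts to this ratio being nondecreasing in `t ∈ (0, 1/2)`.
Differentiating, that is `(1 - 2ε) t(1 - t) L(t) ≤ q(1 - q) L(q)`. As `1 - 2q = (1 - 2ε)(1 - 2t)`
and `t ≤ q`, this is monotonicity of `p(1 - p) L(p) / (1 - 2p)`, whose derivative has the sign of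
`(1 - 2p + 2p²) L(p) - (1 - 2p)`; it is nonnegative because `L(p) ≥ 2(1 - 2p)`, the first term of
the power series of `log ((1 + s) / (1 - s))` at `s = 1 - 2p`.
-/

open Real Set

lemma monotoneOn_Ioo_of_hasDerivAt_nonneg {a b : ℝ} {f f' : ℝ → ℝ}
    (hf : ∀ x ∈ Ioo a b, HasDerivAt f (f' x) x) (hf' : ∀ x ∈ Ioo a b, 0 ≤ f' x) :
    MonotoneOn f (Ioo a b) := by
  refine monotoneOn_of_hasDerivWithinAt_nonneg (f' := f') (convex_Ioo a b)
    (fun x hx ↦ (hf x hx).continuousAt.continuousWithinAt) ?_ ?_ <;> rw [interior_Ioo]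
  exacts [fun x hx ↦ (hf x hx).hasDerivWithinAt, hf']

lemma H2_eq_binEntropy_div (x : ℝ) : H2 x = binEntropy x / log 2 := by
  simp only [H2, binEntropy, logb, log_inv]
  ring

lemma H2_zero : H2 0 = 0 := by simp [H2_eq_binEntropy_div]

lemma H2_half : H2 (1 / 2) = 1 := by
  rw [H2_eq_binEntropy_div, one_div, binEntropy_two_inv, div_self (log_pos one_lt_two).ne']

lemma continuous_H2 : Continuous H2 := by
  simp only [funext H2_eq_binEntropy_div]
  fun_prop

lemma strictMonoOn_H2 : StrictMonoOn H2 (Icc 0 (1 / 2)) := by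
  intro a ha b hb hab
  simp only [H2_eq_binEntropy_div]
  rw [one_div] at ha hb
  exact div_lt_div_of_pos_right (binEntropy_strictMonoOn ha hb hab) (log_pos one_lt_two)

lemma mapsTo_H2 : MapsTo H2 (Icc 0 (1 / 2)) (Icc 0 1) := fun t ht ↦ by
  have hmono := strictMonoOn_H2.monotoneOn
  constructor
  · simpa only [H2_zero] using hmono (left_mem_Icc.2 (by norm_num)) ht ht.1
  · simpa only [H2_half] using hmono ht (right_mem_Icc.2 (by norm_num)) ht.2

lemma surjOn_H2 : SurjOn H2 (Icc 0 (1 / 2)) (Icc 0 1) := by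
  have h := intermediate_value_Icc (by norm_num : (0 : ℝ) ≤ 1 / 2) continuous_H2.continuousOn
  rwa [H2_zero, H2_half] at h

lemma H2_H2inv {y : ℝ} (hy : y ∈ Icc (0 : ℝ) 1) : H2 (H2inv y) = y :=
  surjOn_H2.rightInvOn_invFunOn hy

lemma H2inv_H2 {t : ℝ} (ht : t ∈ Icc (0 : ℝ) (1 / 2)) : H2inv (H2 t) = t :=
  strictMonoOn_H2.injOn.leftInvOn_invFunOn ht

lemma mapsTo_H2inv : MapsTo H2inv (Icc 0 1) (Icc 0 (1 / 2)) :=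
  surjOn_H2.mapsTo_invFunOn

lemma image_H2inv : H2inv '' Icc 0 1 = Icc (0 : ℝ) (1 / 2) :=
  mapsTo_H2inv.image_subset.antisymm fun t ht ↦ ⟨H2 t, mapsTo_H2 ht, H2inv_H2 ht⟩

lemma H2inv_zero : H2inv 0 = 0 := by
  simpa only [H2_zero] using H2inv_H2 (left_mem_Icc.2 (by norm_num))

lemma H2inv_one : H2inv 1 = 1 / 2 := by
  simpa only [H2_half] using H2inv_H2 (right_mem_Icc.2 (by norm_num))

lemma strictMonoOn_H2inv : StrictMonoOn H2inv (Icc 0 1) := fun a ha b hb hab ↦ by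
  rwa [← strictMonoOn_H2.lt_iff_lt (mapsTo_H2inv ha) (mapsTo_H2inv hb), H2_H2inv ha, H2_H2inv hb]

lemma H2inv_mem_Ioo {y : ℝ} (hy : y ∈ Ioo (0 : ℝ) 1) : H2inv y ∈ Ioo (0 : ℝ) (1 / 2) := by
  have hIcc := Ioo_subset_Icc_self hy
  rw [← H2inv_zero, ← H2inv_one]
  exact ⟨strictMonoOn_H2inv (left_mem_Icc.2 zero_le_one) hIcc hy.1,
    strictMonoOn_H2inv hIcc (right_mem_Icc.2 zero_le_one) hy.2⟩

lemma continuousAt_H2inv {y : ℝ} (hy : y ∈ Ioo (0 : ℝ) 1) : ContinuousAt H2inv y := by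
  refine strictMonoOn_H2inv.continuousAt_of_image_mem_nhds (Icc_mem_nhds hy.1 hy.2) ?_
  rw [image_H2inv]
  exact Icc_mem_nhds (H2inv_mem_Ioo hy).1 (H2inv_mem_Ioo hy).2

lemma continuousOn_H2inv : ContinuousOn H2inv (Icc 0 1) := by
  intro y hy
  rcases hy.1.eq_or_lt with rfl | h0
  · refine (strictMonoOn_H2inv.continuousWithinAt_right_of_image_mem_nhdsWithin
      (Icc_mem_nhdsGE (zero_lt_one' ℝ)) ?_).mono Icc_subset_Ici_self
    rw [image_H2inv, H2inv_zero]
    exact Icc_mem_nhdsGE (by norm_num)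
  rcases hy.2.eq_or_lt with rfl | h1
  · refine (strictMonoOn_H2inv.continuousWithinAt_left_of_image_mem_nhdsWithin
      (Icc_mem_nhdsLE (zero_lt_one' ℝ)) ?_).mono Icc_subset_Iic_self
    rw [image_H2inv, H2inv_one]
    exact Icc_mem_nhdsLE (by norm_num)
  exact (continuousAt_H2inv ⟨h0, h1⟩).continuousWithinAt

noncomputable def logOdds (p : ℝ) : ℝ := log (1 - p) - log p

lemma hasDerivAt_H2 {p : ℝ} (hp0 : p ≠ 0) (hp1 : p ≠ 1) :
    HasDerivAt H2 (logOdds p / log 2) p := by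
  rw [show H2 = fun x ↦ binEntropy x / log 2 from funext H2_eq_binEntropy_div]
  exact (hasDerivAt_binEntropy hp0 hp1).div_const _

lemma hasDerivAt_logOdds {p : ℝ} (hp0 : 0 < p) (hp1 : p < 1) :
    HasDerivAt logOdds (-(p * (1 - p))⁻¹) p := by
  have h := ((hasDerivAt_id' p).const_sub 1).log (sub_pos.2 hp1).ne' |>.sub
    (hasDerivAt_log hp0.ne')
  refine h.congr_deriv ?_
  field_simp [(sub_pos.2 hp1).ne']
  ring

lemma logOdds_pos {p : ℝ} (hp0 : 0 < p) (hp : p < 1 / 2) : 0 < logOdds p :=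
  sub_pos.2 (log_lt_log hp0 (by linarith))

lemma two_mul_one_sub_two_mul_le_logOdds {p : ℝ} (hp0 : 0 < p) (hp : p ≤ 1 / 2) :
    2 * (1 - 2 * p) ≤ logOdds p := by
  have hx : |1 - 2 * p| < 1 := abs_lt.2 ⟨by linarith, by linarith⟩
  have hsum := le_hasSum (hasSum_log_sub_log_of_abs_lt_one hx) 0 fun k _ ↦
    mul_nonneg (by positivity) (pow_nonneg (by linarith) _)
  have hlog : log (1 + (1 - 2 * p)) - log (1 - (1 - 2 * p)) = logOdds p := by
    rw [show 1 + (1 - 2 * p) = 2 * (1 - p) by ring, show 1 - (1 - 2 * p) = 2 * p by ring,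
      log_mul two_ne_zero (by linarith), log_mul two_ne_zero hp0.ne', logOdds]
    ring
  rw [hlog] at hsum
  simpa using hsum

lemma one_sub_two_mul_le_mul_logOdds {p : ℝ} (hp0 : 0 < p) (hp : p ≤ 1 / 2) :
    1 - 2 * p ≤ (1 - 2 * p + 2 * p ^ 2) * logOdds p := by
  have hL := two_mul_one_sub_two_mul_le_logOdds hp0 hp
  have hq : 0 ≤ 1 - 2 * p + 2 * p ^ 2 := by nlinarith [sq_nonneg p]
  nlinarith [mul_le_mul_of_nonneg_left hL hq, pow_nonneg (by linarith : 0 ≤ 1 - 2 * p) 3]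

lemma monotoneOn_mul_logOdds_div : MonotoneOn
    (fun p ↦ p * (1 - p) * logOdds p / (1 - 2 * p)) (Ioo 0 (1 / 2)) := by
  have hderiv : ∀ p ∈ Ioo (0 : ℝ) (1 / 2),
      HasDerivAt (fun p ↦ p * (1 - p) * logOdds p / (1 - 2 * p))
      (((1 - 2 * p + 2 * p ^ 2) * logOdds p - (1 - 2 * p)) / (1 - 2 * p) ^ 2) p := by
    intro p ⟨hp0, hp⟩
    have h := (((hasDerivAt_id' p).mul ((hasDerivAt_id' p).const_sub 1)).mul
      (hasDerivAt_logOdds hp0 (by linarith))).div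
      (((hasDerivAt_id' p).const_mul 2).const_sub 1) (by linarith)
    refine h.congr_deriv ?_
    simp only [Pi.mul_apply]
    field_simp [(by linarith : 1 - p ≠ 0), (by linarith : 1 - 2 * p ≠ 0)]
    ring
  exact monotoneOn_Ioo_of_hasDerivAt_nonneg hderiv fun p hp ↦
    div_nonneg (sub_nonneg.2 (one_sub_two_mul_le_mul_logOdds hp.1 hp.2.le)) (sq_nonneg _)

/-- The crossover probability `t ⋆ ε = t (1 - ε) + (1 - t) ε` of two binary symmetric channels
in series. -/
def binConv (ε t : ℝ) : ℝ := (1 - 2 * ε) * t + ε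

lemma binConv_mem_Icc {ε t : ℝ} (hε0 : 0 ≤ ε) (hε1 : ε ≤ 1 / 2) (ht : t ≤ 1 / 2) :
    binConv ε t ∈ Icc t (1 / 2) := by
  constructor <;> unfold binConv <;> nlinarith

lemma one_sub_two_mul_binConv (ε t : ℝ) :
    1 - 2 * binConv ε t = (1 - 2 * ε) * (1 - 2 * t) := by
  unfold binConv
  ring

lemma mul_mul_logOdds_le_binConv {ε t : ℝ} (hε0 : 0 ≤ ε) (hε1 : ε ≤ 1 / 2) (ht0 : 0 < t)
    (ht : t < 1 / 2) :
    (1 - 2 * ε) * (t * (1 - t) * logOdds t) ≤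
      binConv ε t * (1 - binConv ε t) * logOdds (binConv ε t) := by
  set q := binConv ε t
  obtain ⟨htq, hq⟩ := binConv_mem_Icc hε0 hε1 ht.le
  have hq0 : 0 < q := ht0.trans_le htq
  rcases hε1.eq_or_lt with rfl | hε
  · have hL := two_mul_one_sub_two_mul_le_logOdds hq0 hq
    rw [show 1 - 2 * (1 / 2 : ℝ) = 0 by norm_num, zero_mul]
    exact mul_nonneg (mul_nonneg hq0.le (by linarith)) (by linarith)
  · have hdiff := one_sub_two_mul_binConv ε t
    have hq2 : 0 < 1 - 2 * q := by rw [hdiff]; exact mul_pos (by linarith) (by linarith)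
    have hmono := monotoneOn_mul_logOdds_div ⟨ht0, ht⟩ ⟨hq0, by linarith⟩ htq
    calc (1 - 2 * ε) * (t * (1 - t) * logOdds t)
        = t * (1 - t) * logOdds t / (1 - 2 * t) * (1 - 2 * q) := by
          rw [hdiff]
          field_simp [(by linarith : 1 - 2 * t ≠ 0)]
      _ ≤ q * (1 - q) * logOdds q / (1 - 2 * q) * (1 - 2 * q) :=
          mul_le_mul_of_nonneg_right hmono hq2.le
      _ = q * (1 - q) * logOdds q := div_mul_cancel₀ _ hq2.ne'

/-- `∂φ/∂x (x, ε)` at `x = 1 - H2 t`. -/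
noncomputable def gerberSlope (ε t : ℝ) : ℝ :=
  (1 - 2 * ε) * logOdds (binConv ε t) / logOdds t

lemma monotoneOn_gerberSlope {ε : ℝ} (hε0 : 0 ≤ ε) (hε1 : ε ≤ 1 / 2) :
    MonotoneOn (gerberSlope ε) (Ioo 0 (1 / 2)) := by
  refine monotoneOn_Ioo_of_hasDerivAt_nonneg (f' := fun t ↦ (1 - 2 * ε) *
      (binConv ε t * (1 - binConv ε t) * logOdds (binConv ε t) -
        (1 - 2 * ε) * (t * (1 - t) * logOdds t)) /
      (t * (1 - t) * (binConv ε t * (1 - binConv ε t)) * logOdds t ^ 2)) ?_ ?_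
  all_goals
    intro t ⟨ht0, ht⟩
    obtain ⟨htq, hq⟩ := binConv_mem_Icc hε0 hε1 ht.le
    have hq0 : 0 < binConv ε t := ht0.trans_le htq
  · have hconv : HasDerivAt (binConv ε) ((1 - 2 * ε) * 1) t :=
      ((hasDerivAt_id' t).const_mul (1 - 2 * ε)).add_const ε
    have h := (((hasDerivAt_logOdds hq0 (by linarith)).comp t hconv).const_mul
      (1 - 2 * ε)).div (hasDerivAt_logOdds ht0 (by linarith)) (logOdds_pos ht0 ht).ne'
    refine h.congr_deriv ?_
    simp only [Function.comp_apply]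
    field_simp [(by linarith : 1 - t ≠ 0), (by linarith : 1 - binConv ε t ≠ 0),
      (logOdds_pos ht0 ht).ne']
    ring
  · exact div_nonneg (mul_nonneg (by linarith)
      (sub_nonneg.2 (mul_mul_logOdds_le_binConv hε0 hε1 ht0 ht)))
      (mul_nonneg (mul_nonneg (mul_nonneg ht0.le (by linarith))
        (mul_nonneg hq0.le (by linarith))) (sq_nonneg _))

lemma hasDerivAt_H2inv {y : ℝ} (hy : y ∈ Ioo (0 : ℝ) 1) :
    HasDerivAt H2inv (logOdds (H2inv y) / log 2)⁻¹ y := by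
  obtain ⟨ht0, ht⟩ := H2inv_mem_Ioo hy
  exact (hasDerivAt_H2 ht0.ne' (by linarith)).of_local_left_inverse (continuousAt_H2inv hy)
    (div_pos (logOdds_pos ht0 ht) (log_pos one_lt_two)).ne'
    (Filter.eventually_of_mem (isOpen_Ioo.mem_nhds hy) fun z hz ↦
      H2_H2inv (Ioo_subset_Icc_self hz))

lemma hasDerivAt_phi {ε x : ℝ} (hε0 : 0 ≤ ε) (hε1 : ε ≤ 1 / 2) (hx : x ∈ Ioo (0 : ℝ) 1) :
    HasDerivAt (fun x ↦ phi x ε) (gerberSlope ε (H2inv (1 - x))) x := by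
  have hx' : 1 - x ∈ Ioo (0 : ℝ) 1 := ⟨by linarith [hx.2], by linarith [hx.1]⟩
  obtain ⟨ht0, ht⟩ := H2inv_mem_Ioo hx'
  obtain ⟨htq, hq⟩ := binConv_mem_Icc hε0 hε1 ht.le
  have h := ((hasDerivAt_H2 (ht0.trans_le htq).ne' (by linarith)).comp x
    ((((hasDerivAt_H2inv hx').comp x ((hasDerivAt_id' x).const_sub 1)).const_mul
      (1 - 2 * ε)).add_const ε)).const_sub 1
  refine h.congr_deriv ?_
  unfold gerberSlope
  field_simp [(logOdds_pos ht0 ht).ne', (log_pos one_lt_two).ne']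

lemma continuousOn_phi (ε : ℝ) : ContinuousOn (fun x ↦ phi x ε) (Icc 0 1) := by
  have h : ContinuousOn (fun x ↦ H2inv (1 - x)) (Icc 0 1) :=
    continuousOn_H2inv.comp (by fun_prop) fun x hx ↦ ⟨by linarith [hx.2], by linarith [hx.1]⟩
  have := continuous_H2
  unfold phi
  fun_prop

/-- Mrs. Gerber's function `x ↦ φ(x,ε)` is concave on `[0,1]`. -/
theorem stmt1 (ε : ℝ) (hε0 : 0 ≤ ε) (hε1 : ε ≤ 1 / 2) :
    ConcaveOn ℝ (Set.Icc (0 : ℝ) 1) (fun x => phi x ε) := by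
  have hderiv := fun x (hx : x ∈ Ioo (0 : ℝ) 1) ↦ hasDerivAt_phi hε0 hε1 hx
  have hreflect : MapsTo (fun x ↦ 1 - x) (Ioo (0 : ℝ) 1) (Ioo 0 1) :=
    fun x hx ↦ ⟨by linarith [hx.2], by linarith [hx.1]⟩
  have hslope : AntitoneOn (fun x ↦ gerberSlope ε (H2inv (1 - x))) (Ioo 0 1) :=
    ((monotoneOn_gerberSlope hε0 hε1).comp
      (strictMonoOn_H2inv.monotoneOn.mono Ioo_subset_Icc_self) fun _ hy ↦ H2inv_mem_Ioo hy
      ).comp_AntitoneOn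
      (fun _ _ _ _ hab ↦ sub_le_sub_left hab 1) hreflect
  refine AntitoneOn.concaveOn_of_deriv (convex_Icc 0 1) (continuousOn_phi ε) ?_ ?_ <;>
    rw [interior_Icc]
  · exact fun x hx ↦ (hderiv x hx).differentiableAt.differentiableWithinAt
  · exact hslope.congr fun x hx ↦ (hderiv x hx).deriv.symm
end

section
/- For all 0 ≤ ε ≤ 1/2 and all x ∈ [0,1], one has (1 − H₂(ε))·x ≤ φ(x,ε) ≤ (1−2ε)²·x. -/
open Finset

/-!
Write `u = 1 - 2p`. Then `1 - H₂(p) = C(u) / log 2`, where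
`C(u) = ((1 + u) log (1 + u) + (1 - u) log (1 - u)) / 2` is the capacity, in nats, of the binary
symmetric channel with crossover probability `p`; moreover `x = C(μ) / log 2` and
`φ(x, ε) = C(λμ) / log 2` for `λ = 1 - 2ε`, `μ = 1 - 2 H₂⁻¹(1 - x)`. Since `C(1) = log 2`, the two
bounds read `C(λ) C(μ) ≤ C(1) C(λμ)` and `C(λμ) ≤ λ² C(μ)`.

As `C' = artanh`, the upper bound follows from `C(u) / u²` being nondecreasing, i.e. from
`2 C(u) ≤ u artanh u`. The lower bound says that `s ↦ log C(eˢ)` is convex, i.e. that the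
elasticity `u artanh u / C(u)` is nondecreasing. Both come down to the elementary bounds
`u ≤ artanh u ≤ u / (1 - u²)` on `[0, 1)`, through a chain of inequalities each proved by
differentiating.
-/

open Real

lemma le_of_hasDerivAt_nonneg {f f' : ℝ → ℝ} {a b x : ℝ}
    (hf : ∀ y ∈ Set.Ico a b, HasDerivAt f (f' y) y) (hf' : ∀ y ∈ Set.Ioo a b, 0 ≤ f' y)
    (hx : x ∈ Set.Ico a b) : f a ≤ f x := by
  have hmono : MonotoneOn f (Set.Ico a b) := by
    refine monotoneOn_of_deriv_nonneg (convex_Ico a b)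
      (fun y hy => (hf y hy).continuousAt.continuousWithinAt) ?_ ?_ <;> rw [interior_Ico]
    · exact fun y hy => (hf y (Set.Ioo_subset_Ico_self hy)).differentiableAt.differentiableWithinAt
    · exact fun y hy => (hf y (Set.Ioo_subset_Ico_self hy)).deriv ▸ hf' y hy
  exact hmono (Set.left_mem_Ico.2 (hx.1.trans_lt hx.2)) hx hx.1

lemma monotoneOn_div_pow_of_le_mul_deriv {f f' : ℝ → ℝ} {k : ℕ}
    (hf : ContinuousOn f (Set.Ioc 0 1)) (hf' : ∀ x ∈ Set.Ioo 0 1, HasDerivAt f (f' x) x)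
    (h : ∀ x ∈ Set.Ioo 0 1, k * f x ≤ x * f' x) :
    MonotoneOn (fun x => f x / x ^ k) (Set.Ioc 0 1) := by
  have hd : ∀ x ∈ Set.Ioo (0 : ℝ) 1, HasDerivAt (fun x => f x / x ^ k)
      ((f' x * x ^ k - f x * (k * x ^ (k - 1))) / (x ^ k) ^ 2) x :=
    fun x hx => (hf' x hx).div (hasDerivAt_pow k x) (pow_ne_zero k hx.1.ne')
  refine monotoneOn_of_deriv_nonneg (convex_Ioc 0 1)
    (hf.div (continuousOn_pow k) fun x hx => pow_ne_zero k hx.1.ne') ?_ ?_ <;> rw [interior_Ioc]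
  · exact fun x hx => (hd x hx).differentiableAt.differentiableWithinAt
  · intro x hx
    rw [(hd x hx).deriv]
    refine div_nonneg ?_ (sq_nonneg _)
    have key : x * (f' x * x ^ k - f x * (k * x ^ (k - 1))) = x ^ k * (x * f' x - k * f x) := by
      rcases k with _ | k
      · simp
      · simp only [Nat.add_sub_cancel, pow_succ]
        ring
    refine (mul_nonneg_iff_of_pos_left hx.1).1 ?_
    rw [key]
    exact mul_nonneg (pow_nonneg hx.1.le k) (sub_nonneg.2 (h x hx))

lemma mul_le_mul_of_monotoneOn_elasticity {f f' : ℝ → ℝ}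
    (hf : ContinuousOn f (Set.Ioc 0 1)) (hf' : ∀ x ∈ Set.Ioo 0 1, HasDerivAt f (f' x) x)
    (hpos : ∀ x ∈ Set.Ioc 0 1, 0 < f x)
    (hm : MonotoneOn (fun x => x * f' x / f x) (Set.Ioo 0 1))
    {a b : ℝ} (ha : a ∈ Set.Ioc 0 1) (hb : b ∈ Set.Ioc 0 1) :
    f a * f b ≤ f 1 * f (a * b) := by
  obtain ⟨hb₀, hb₁⟩ := hb
  have hsb : ∀ s ∈ Set.Ioc (0 : ℝ) 1, s * b ∈ Set.Ioc 0 1 := fun s hs =>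
    ⟨mul_pos hs.1 hb₀, mul_le_one₀ hs.2 hb₀.le hb₁⟩
  have hd : ∀ s ∈ Set.Ioo (0 : ℝ) 1, HasDerivAt (fun s => log (f (s * b)) - log (f s))
      (f' (s * b) * b / f (s * b) - f' s / f s) s := fun s hs =>
    (((hf' (s * b) ⟨mul_pos hs.1 hb₀, by nlinarith [hs.1, hs.2]⟩).comp s
      (hasDerivAt_mul_const b)).log (hpos _ (hsb s (Set.Ioo_subset_Ioc_self hs))).ne').sub
      ((hf' s hs).log (hpos s (Set.Ioo_subset_Ioc_self hs)).ne')
  -- the derivative is `(m (s * b) - m s) / s ≤ 0`, where `m x = x * f' x / f x`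
  have hanti : AntitoneOn (fun s => log (f (s * b)) - log (f s)) (Set.Ioc 0 1) := by
    refine antitoneOn_of_deriv_nonpos (convex_Ioc 0 1) ?_ ?_ ?_
    · refine ContinuousOn.sub ?_ (hf.log fun x hx => (hpos x hx).ne')
      exact (hf.comp (continuousOn_id.mul continuousOn_const) hsb).log
        fun x hx => (hpos _ (hsb x hx)).ne'
    · rw [interior_Ioc]
      exact fun s hs => (hd s hs).differentiableAt.differentiableWithinAt
    · rw [interior_Ioc]
      intro s hs
      rw [(hd s hs).deriv, sub_nonpos]
      have hsb' : s * b ∈ Set.Ioo 0 1 := ⟨mul_pos hs.1 hb₀, by nlinarith [hs.1, hs.2]⟩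
      have := hm hsb' hs (mul_le_of_le_one_right hs.1.le hb₁)
      have hs₀ := hs.1.ne'
      calc f' (s * b) * b / f (s * b) = (s * b) * f' (s * b) / f (s * b) / s := by
            field_simp
        _ ≤ s * f' s / f s / s := by gcongr; exact hs.1.le
        _ = f' s / f s := by field_simp
  have := hanti ha ⟨one_pos, le_rfl⟩ ha.2
  simp only [one_mul] at this
  have hpa := hpos a ha
  have hpb := hpos b ⟨hb₀, hb₁⟩
  have hp1 := hpos 1 ⟨one_pos, le_rfl⟩
  have hpab := hpos _ (hsb a ha)
  rw [← log_le_log_iff (by positivity) (by positivity), log_mul hpa.ne' hpb.ne',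
    log_mul hp1.ne' hpab.ne']
  linarith

lemma hasDerivAt_artanh {x : ℝ} (h₁ : -1 < x) (h₂ : x < 1) :
    HasDerivAt artanh (1 - x ^ 2)⁻¹ x := by
  have hlog : HasDerivAt (fun y => 1 / 2 * log ((1 + y) / (1 - y))) (1 - x ^ 2)⁻¹ x := by
    have hq : HasDerivAt (fun y => (1 + y) / (1 - y)) (2 / (1 - x) ^ 2) x := by
      refine (((hasDerivAt_id' x).const_add 1).fun_div ((hasDerivAt_id' x).const_sub 1)
        (by linarith : 1 - x ≠ 0)).congr_deriv ?_
      field_simp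
      ring
    refine ((hq.log (div_pos (by linarith) (by linarith)).ne').const_mul (1 / 2)).congr_deriv ?_
    field_simp
    ring
  refine hlog.congr_of_eventuallyEq ?_
  filter_upwards [Ioo_mem_nhds h₁ h₂] with y hy
  exact artanh_eq_half_log (Set.Ioo_subset_Icc_self hy)

lemma self_le_artanh {u : ℝ} (h₀ : 0 ≤ u) (h₁ : u < 1) : u ≤ artanh u := by
  have := le_of_hasDerivAt_nonneg (f := fun x => artanh x - x)
    (fun x hx => (hasDerivAt_artanh (by linarith [hx.1]) hx.2).sub (hasDerivAt_id x))
    (fun x hx => sub_nonneg.2 <|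
      one_le_inv_iff₀.2 ⟨by nlinarith [hx.1, hx.2], by nlinarith [hx.1]⟩)
    (Set.mem_Ico.2 ⟨h₀, h₁⟩)
  simpa [artanh_zero] using this

lemma artanh_le_div {u : ℝ} (h₀ : 0 ≤ u) (h₁ : u < 1) : artanh u ≤ u / (1 - u ^ 2) := by
  have := le_of_hasDerivAt_nonneg
    (f := fun x => x / (1 - x ^ 2) - artanh x)
    (f' := fun x => (1 + x ^ 2) / (1 - x ^ 2) ^ 2 - (1 - x ^ 2)⁻¹)
    (fun x hx => by
      have : 1 - x ^ 2 ≠ 0 := by nlinarith [hx.1, hx.2]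
      refine HasDerivAt.sub ?_ (hasDerivAt_artanh (by linarith [hx.1]) hx.2)
      refine ((hasDerivAt_id' x).fun_div ((hasDerivAt_pow 2 x).const_sub 1) this).congr_deriv ?_
      field_simp
      ring)
    (fun x hx => by
      have : 0 < 1 - x ^ 2 := by nlinarith [hx.1, hx.2]
      rw [sub_nonneg, inv_eq_one_div, div_le_div_iff₀ this (by positivity)]
      nlinarith)
    (Set.mem_Ico.2 ⟨h₀, h₁⟩)
  simpa [artanh_zero] using this

noncomputable def bscCapacity (u : ℝ) : ℝ := log 2 - binEntropy ((1 - u) / 2)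

lemma bscCapacity_zero : bscCapacity 0 = 0 := by
  simp [bscCapacity]

lemma bscCapacity_one : bscCapacity 1 = log 2 := by
  simp [bscCapacity]

lemma continuous_bscCapacity : Continuous bscCapacity := by
  unfold bscCapacity
  fun_prop

lemma bscCapacity_pos {u : ℝ} (hu : u ≠ 0) : 0 < bscCapacity u := by
  rw [bscCapacity, sub_pos, binEntropy_lt_log_two]
  contrapose! hu
  linarith

lemma hasDerivAt_bscCapacity {u : ℝ} (h₁ : -1 < u) (h₂ : u < 1) :
    HasDerivAt bscCapacity (artanh u) u := by
  have hp : HasDerivAt (fun v : ℝ => (1 - v) / 2) (-1 / 2) u := by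
    simpa using ((hasDerivAt_id' u).const_sub 1).div_const 2
  refine (((hasDerivAt_binEntropy (p := (1 - u) / 2) (by linarith) (by linarith)).comp u
    hp).const_sub (log 2)).congr_deriv ?_
  rw [artanh_eq_half_log ⟨h₁.le, h₂.le⟩, show 1 - (1 - u) / 2 = (1 + u) / 2 by ring,
    log_div (x := 1 + u) (y := 1 - u) (by linarith) (by linarith),
    log_div (x := 1 + u) (by linarith) two_ne_zero, log_div (x := 1 - u) (by linarith) two_ne_zero]
  ring

lemma two_mul_bscCapacity_le {u : ℝ} (h₀ : 0 ≤ u) (h₁ : u < 1) :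
    2 * bscCapacity u ≤ u * artanh u := by
  have := le_of_hasDerivAt_nonneg (f := fun x => x * artanh x - 2 * bscCapacity x)
    (f' := fun x => x / (1 - x ^ 2) - artanh x)
    (fun x hx => by
      have hA := hasDerivAt_artanh (by linarith [hx.1]) hx.2
      refine (((hasDerivAt_id' x).fun_mul hA).fun_sub
        ((hasDerivAt_bscCapacity (by linarith [hx.1]) hx.2).const_mul 2)).congr_deriv ?_
      ring)
    (fun x hx => sub_nonneg.2 (artanh_le_div hx.1.le hx.2)) (Set.mem_Ico.2 ⟨h₀, h₁⟩)
  simp only [artanh_zero, bscCapacity_zero] at this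
  linarith

lemma mul_artanh_le_two_mul_bscCapacity {u : ℝ} (h₀ : 0 ≤ u) (h₁ : u < 1) :
    u * (1 - u ^ 2) * artanh u ≤ 2 * bscCapacity u := by
  have := le_of_hasDerivAt_nonneg (f := fun x => 2 * bscCapacity x - x * (1 - x ^ 2) * artanh x)
    (f' := fun x => (1 + 3 * x ^ 2) * artanh x - x)
    (fun x hx => by
      have hx2 : 1 - x ^ 2 ≠ 0 := by nlinarith [hx.1, hx.2]
      have hA := hasDerivAt_artanh (by linarith [hx.1]) hx.2
      refine (((hasDerivAt_bscCapacity (by linarith [hx.1]) hx.2).const_mul 2).fun_sub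
        (((hasDerivAt_id' x).fun_mul ((hasDerivAt_pow 2 x).const_sub 1)).fun_mul hA)).congr_deriv ?_
      field_simp
      ring)
    (fun x hx => by nlinarith [self_le_artanh hx.1.le hx.2, artanh_nonneg hx.1.le])
    (Set.mem_Ico.2 ⟨h₀, h₁⟩)
  simp only [artanh_zero, bscCapacity_zero] at this
  linarith

lemma mul_artanh_sq_le_mul_bscCapacity {u : ℝ} (h₀ : 0 ≤ u) (h₁ : u < 1) :
    u * artanh u ^ 2 ≤ (artanh u + u / (1 - u ^ 2)) * bscCapacity u := by
  have := le_of_hasDerivAt_nonneg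
    (f := fun x => (artanh x + x / (1 - x ^ 2)) * bscCapacity x - x * artanh x ^ 2)
    (f' := fun x => (2 * bscCapacity x - x * (1 - x ^ 2) * artanh x) / (1 - x ^ 2) ^ 2)
    (fun x hx => by
      have hx2 : 1 - x ^ 2 ≠ 0 := by nlinarith [hx.1, hx.2]
      have hA := hasDerivAt_artanh (by linarith [hx.1]) hx.2
      have hB := (hasDerivAt_id' x).fun_div ((hasDerivAt_pow 2 x).const_sub 1) hx2
      refine (((hA.fun_add hB).fun_mul (hasDerivAt_bscCapacity (by linarith [hx.1]) hx.2)).fun_sub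
        ((hasDerivAt_id' x).fun_mul (hA.fun_pow 2))).congr_deriv ?_
      field_simp
      ring)
    (fun x hx => div_nonneg (sub_nonneg.2 (mul_artanh_le_two_mul_bscCapacity hx.1.le hx.2))
      (by positivity))
    (Set.mem_Ico.2 ⟨h₀, h₁⟩)
  simp only [artanh_zero, bscCapacity_zero] at this
  linarith

lemma bscCapacity_mul_le {a b : ℝ} (ha₀ : 0 ≤ a) (ha₁ : a ≤ 1) (hb₀ : 0 ≤ b) (hb₁ : b ≤ 1) :
    bscCapacity (a * b) ≤ a ^ 2 * bscCapacity b := by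
  rcases ha₀.eq_or_lt with rfl | ha₀
  · simp [bscCapacity_zero]
  rcases hb₀.eq_or_lt with rfl | hb₀
  · simp [bscCapacity_zero]
  have hmono := monotoneOn_div_pow_of_le_mul_deriv (k := 2)
    continuous_bscCapacity.continuousOn
    (fun x hx => hasDerivAt_bscCapacity (by linarith [hx.1]) hx.2)
    (fun x hx => by exact_mod_cast two_mul_bscCapacity_le hx.1.le hx.2)
  have := hmono ⟨mul_pos ha₀ hb₀, by nlinarith⟩ ⟨hb₀, hb₁⟩ (by nlinarith)
  simp only at this
  rw [div_le_div_iff₀ (by positivity) (by positivity)] at this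
  exact le_of_mul_le_mul_right (this.trans_eq (by ring)) (pow_pos hb₀ 2)

lemma monotoneOn_mul_artanh_div_bscCapacity :
    MonotoneOn (fun u => u * artanh u / bscCapacity u) (Set.Ioo 0 1) := by
  have hd : ∀ x ∈ Set.Ioo (0 : ℝ) 1, HasDerivAt (fun u => u * artanh u / bscCapacity u)
      (((artanh x + x * (1 - x ^ 2)⁻¹) * bscCapacity x - x * artanh x * artanh x) /
        bscCapacity x ^ 2) x := by
    intro x hx
    have hA := hasDerivAt_artanh (by linarith [hx.1]) hx.2
    simpa using ((hasDerivAt_id' x).fun_mul hA).fun_div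
      (hasDerivAt_bscCapacity (by linarith [hx.1]) hx.2) (bscCapacity_pos hx.1.ne').ne'
  refine monotoneOn_of_deriv_nonneg (convex_Ioo 0 1)
    (fun x hx => (hd x hx).continuousAt.continuousWithinAt) ?_ ?_ <;> rw [interior_Ioo]
  · exact fun x hx => (hd x hx).differentiableAt.differentiableWithinAt
  · intro x hx
    rw [(hd x hx).deriv]
    have := mul_artanh_sq_le_mul_bscCapacity hx.1.le hx.2
    rw [div_eq_mul_inv x] at this
    exact div_nonneg (by linarith) (sq_nonneg _)

lemma bscCapacity_mul_bscCapacity_le {a b : ℝ} (ha₀ : 0 ≤ a) (ha₁ : a ≤ 1) (hb₀ : 0 ≤ b)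
    (hb₁ : b ≤ 1) : bscCapacity a * bscCapacity b ≤ log 2 * bscCapacity (a * b) := by
  rcases ha₀.eq_or_lt with rfl | ha₀
  · simp [bscCapacity_zero]
  rcases hb₀.eq_or_lt with rfl | hb₀
  · simp [bscCapacity_zero]
  rw [← bscCapacity_one]
  exact mul_le_mul_of_monotoneOn_elasticity continuous_bscCapacity.continuousOn
    (fun x hx => hasDerivAt_bscCapacity (by linarith [hx.1]) hx.2)
    (fun x hx => bscCapacity_pos hx.1.ne') monotoneOn_mul_artanh_div_bscCapacity
    ⟨ha₀, ha₁⟩ ⟨hb₀, hb₁⟩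

lemma one_sub_H2_eq (p : ℝ) : 1 - H2 p = bscCapacity (1 - 2 * p) / log 2 := by
  have hlog : log 2 ≠ 0 := (log_pos one_lt_two).ne'
  rw [bscCapacity, show (1 - (1 - 2 * p)) / 2 = p by ring, binEntropy, log_inv, log_inv, H2,
    logb, logb]
  field_simp
  ring

lemma H2inv_spec {y : ℝ} (h₀ : 0 ≤ y) (h₁ : y ≤ 1) :
    H2inv y ∈ Set.Icc 0 (1 / 2) ∧ H2 (H2inv y) = y := by
  have hH2 : H2 = fun p => 1 - bscCapacity (1 - 2 * p) / log 2 := by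
    ext p
    rw [← one_sub_H2_eq]
    ring
  have hcont : ContinuousOn H2 (Set.Icc 0 (1 / 2)) := by
    rw [hH2]
    exact (continuous_const.sub
      ((continuous_bscCapacity.comp (by fun_prop)).div_const _)).continuousOn
  have hy : y ∈ H2 '' Set.Icc 0 (1 / 2) := by
    refine intermediate_value_Icc (by norm_num) hcont ⟨?_, ?_⟩ <;>
      simp [hH2, bscCapacity_zero, bscCapacity_one, h₀, h₁, (log_pos one_lt_two).ne']
  exact ⟨Function.invFunOn_mem hy, Function.invFunOn_eq hy⟩

lemma phi_eq (x ε : ℝ) :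
    phi x ε = bscCapacity ((1 - 2 * ε) * (1 - 2 * H2inv (1 - x))) / log 2 := by
  rw [phi, one_sub_H2_eq]
  ring_nf

/-- `(1 - H₂(ε))·x ≤ φ(x,ε) ≤ (1-2ε)²·x` for `x ∈ [0,1]`, `ε ∈ [0,1/2]`. -/
theorem stmt2 (ε : ℝ) (hε0 : 0 ≤ ε) (hε1 : ε ≤ 1 / 2)
    (x : ℝ) (hx0 : 0 ≤ x) (hx1 : x ≤ 1) :
    (1 - H2 ε) * x ≤ phi x ε ∧ phi x ε ≤ (1 - 2 * ε) ^ 2 * x := by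
  obtain ⟨⟨hp₀, hp₁⟩, hp⟩ := H2inv_spec (y := 1 - x) (by linarith) (by linarith)
  rw [phi_eq, one_sub_H2_eq]
  set b := 1 - 2 * H2inv (1 - x)
  have hx : x = bscCapacity b / log 2 := by
    rw [← sub_sub_cancel 1 x, ← hp, one_sub_H2_eq]
  have hlog : 0 < log 2 := log_pos one_lt_two
  have ha₀ : 0 ≤ 1 - 2 * ε := by linarith
  have hb₀ : 0 ≤ b := by linarith
  rw [hx]
  constructor
  · have := bscCapacity_mul_bscCapacity_le ha₀ (by linarith) hb₀ (by linarith)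
    rw [div_mul_div_comm, div_le_div_iff₀ (by positivity) hlog]
    nlinarith
  · rw [← mul_div_assoc]
    exact div_le_div_of_nonneg_right
      (bscCapacity_mul_le ha₀ (by linarith) hb₀ (by linarith)) hlog.le
end

section
/- Let f : {0,1}^n → ℝ be nonnegative with E_x f = 1, and let 0 ≤ ε ≤ 1/2. Let T be a random subset of {1,…,n} obtained by including each i independently with probability (1−2ε)². Then Ent(T_ε f) ≤ E_T Ent(f | T). -/
open Finset

/-!
Induct on the set `A` of noisy directions. Adding a direction `m ∉ A` composes `T_{ε,A}` with
the one-directional operator `T_{ε,m}`, and the two commute. The chain rule writes `Ent h` as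
`Ent (E_m h)` plus the average over the edges `{x, x ⊕ eₘ}` of the two-point entropy of `h`;
`T_{ε,m}` leaves `E_m h` unchanged and shrinks each two-point entropy by the factor
`λ = (1 - 2ε)²`. Hence `Ent (T_{ε,m} h) ≤ (1 - λ) Ent (E_m h) + λ Ent h`, and the induction
hypothesis for `f` and for `E_m f` (using `E(E_m f | S) = E(f | S \ {m})`) assembles into the
binomial average over `T`.

In the normalisation `a = μ(1 + s)`, `b = μ(1 - s)`, the two-point entropy is
`μ ψ(s) / (2 log 2)` with `ψ = symmMulLog`, and noise replaces `s` by `(1 - 2ε) s`; so the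
contraction is `ψ(r s) ≤ r² ψ(s)`. This holds because `ψ(s) / s²` is increasing on `(0, 1]`:
`s ψ'(s) - 2 ψ(s)` vanishes at `0` and has derivative `2s / (1 - s²) - ψ'(s) ≥ 0`.
-/

open Real

noncomputable def symmMulLog (x : ℝ) : ℝ := (1 + x) * log (1 + x) + (1 - x) * log (1 - x)

lemma symmMulLog_neg (x : ℝ) : symmMulLog (-x) = symmMulLog x := by
  simp only [symmMulLog, sub_neg_eq_add, ← sub_eq_add_neg]
  ring

lemma symmMulLog_abs (x : ℝ) : symmMulLog |x| = symmMulLog x := by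
  rcases abs_choice x with h | h <;> rw [h]
  exact symmMulLog_neg x

lemma symmMulLog_zero : symmMulLog 0 = 0 := by simp [symmMulLog]

lemma continuous_symmMulLog : Continuous symmMulLog :=
  (continuous_mul_log.comp (continuous_const_add 1)).add
    (continuous_mul_log.comp (continuous_const.sub continuous_id))

lemma hasDerivAt_symmMulLog {x : ℝ} (h1 : -1 < x) (h2 : x < 1) :
    HasDerivAt symmMulLog (log (1 + x) - log (1 - x)) x := by
  have hp := (hasDerivAt_mul_log (by linarith : 1 + x ≠ 0)).comp x
    ((hasDerivAt_id x).const_add 1)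
  have hm := (hasDerivAt_mul_log (by linarith : 1 - x ≠ 0)).comp x
    ((hasDerivAt_id x).const_sub 1)
  exact (hp.add hm).congr_deriv (by ring)

lemma hasDerivAt_log_one_add_sub_log_one_sub {x : ℝ} (h1 : -1 < x) (h2 : x < 1) :
    HasDerivAt (fun y => log (1 + y) - log (1 - y)) (1 / (1 + x) + 1 / (1 - x)) x := by
  have hp := ((hasDerivAt_id' x).const_add 1).log (by linarith)
  have hm := ((hasDerivAt_id' x).const_sub 1).log (by linarith)
  exact (hp.sub hm).congr_deriv (by ring)

lemma log_one_add_sub_log_one_sub_le {x : ℝ} (h0 : 0 ≤ x) (h1 : x < 1) :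
    log (1 + x) - log (1 - x) ≤ x * (1 / (1 + x) + 1 / (1 - x)) := by
  have h := log_div_le_sum_range_add h0 h1 0
  rw [log_div (by linarith) (by linarith)] at h
  have hp : 1 + x ≠ 0 := by linarith
  have hm : 1 - x ≠ 0 := by linarith
  have : x * (1 / (1 + x) + 1 / (1 - x)) = 2 * (x / (1 - x ^ 2)) := by
    rw [show 1 - x ^ 2 = (1 + x) * (1 - x) by ring]
    field_simp
    ring
  simp only [range_zero, sum_empty, mul_zero, zero_add, pow_one] at h
  linarith

lemma two_mul_symmMulLog_le {x : ℝ} (h0 : 0 ≤ x) (h1 : x < 1) :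
    2 * symmMulLog x ≤ x * (log (1 + x) - log (1 - x)) := by
  set D : ℝ → ℝ := fun y => y * (log (1 + y) - log (1 - y)) - 2 * symmMulLog y
  have hD : ∀ y ∈ Set.Ico (0 : ℝ) 1,
      HasDerivAt D (y * (1 / (1 + y) + 1 / (1 - y)) - (log (1 + y) - log (1 - y))) y := by
    intro y hy
    have h1 : -1 < y := by linarith [hy.1]
    exact (((hasDerivAt_id' y).mul (hasDerivAt_log_one_add_sub_log_one_sub h1 hy.2)).sub
      ((hasDerivAt_symmMulLog h1 hy.2).const_mul 2)).congr_deriv (by ring)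
  have hmono : MonotoneOn D (Set.Ico 0 1) :=
    monotoneOn_of_hasDerivWithinAt_nonneg (convex_Ico 0 1)
      (fun y hy => (hD y hy).continuousAt.continuousWithinAt)
      (fun y hy => (hD y (interior_subset hy)).hasDerivWithinAt)
      (fun y hy => by
        rw [interior_Ico] at hy
        linarith [log_one_add_sub_log_one_sub_le hy.1.le hy.2])
  have := hmono ⟨le_rfl, zero_lt_one⟩ ⟨h0, h1⟩ h0
  simp only [D, symmMulLog_zero, zero_mul, mul_zero, sub_zero] at this
  linarith

lemma monotoneOn_symmMulLog_div_sq :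
    MonotoneOn (fun x => symmMulLog x / x ^ 2) (Set.Ioc 0 1) := by
  refine monotoneOn_of_hasDerivWithinAt_nonneg (convex_Ioc 0 1)
    (f' := fun y => ((log (1 + y) - log (1 - y)) * y ^ 2 - symmMulLog y * (2 * y)) / (y ^ 2) ^ 2)
    (continuous_symmMulLog.continuousOn.div (by fun_prop) fun y hy => by
      have := hy.1; positivity)
    (fun y hy => ?_) (fun y hy => ?_)
  all_goals rw [interior_Ioc] at hy
  · exact (((hasDerivAt_symmMulLog (by linarith [hy.1]) hy.2).div (hasDerivAt_pow 2 y)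
      (by have := hy.1; positivity)).congr_deriv (by norm_num)).hasDerivWithinAt
  · have h := two_mul_symmMulLog_le hy.1.le hy.2
    have := hy.1
    refine div_nonneg ?_ (by positivity)
    nlinarith

lemma symmMulLog_mul_le_of_nonneg {r s : ℝ} (hr0 : 0 ≤ r) (hr1 : r ≤ 1) (hs0 : 0 ≤ s)
    (hs1 : s ≤ 1) : symmMulLog (r * s) ≤ r ^ 2 * symmMulLog s := by
  rcases hr0.eq_or_lt with rfl | hr
  · simp [symmMulLog]
  rcases hs0.eq_or_lt with rfl | hs
  · simp [symmMulLog]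
  have h := monotoneOn_symmMulLog_div_sq ⟨mul_pos hr hs, by nlinarith⟩ ⟨hs, hs1⟩
    (mul_le_of_le_one_left hs.le hr1)
  rw [div_le_div_iff₀ (by positivity) (by positivity)] at h
  refine le_of_mul_le_mul_right ?_ (by positivity : 0 < s ^ 2)
  linarith [show symmMulLog s * (r * s) ^ 2 = r ^ 2 * symmMulLog s * s ^ 2 by ring]

lemma symmMulLog_mul_le {r s : ℝ} (hr : |r| ≤ 1) (hs : |s| ≤ 1) :
    symmMulLog (r * s) ≤ r ^ 2 * symmMulLog s := by
  rw [← symmMulLog_abs, abs_mul, ← symmMulLog_abs s, ← sq_abs r]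
  exact symmMulLog_mul_le_of_nonneg (abs_nonneg r) hr (abs_nonneg s) hs

noncomputable def entPair (a b : ℝ) : ℝ :=
  (a * logb 2 a + b * logb 2 b) / 2 - (a + b) / 2 * logb 2 ((a + b) / 2)

lemma mul_mul_log_mul (x y : ℝ) : x * y * log (x * y) = y * (x * log x) + x * (y * log y) := by
  have := negMulLog_mul x y
  simp only [negMulLog] at this
  linarith

lemma entPair_mul_one_add_mul_one_sub (m s : ℝ) :
    entPair (m * (1 + s)) (m * (1 - s)) = m * symmMulLog s / (2 * log 2) := by
  simp only [entPair, logb, ← mul_div_assoc, mul_mul_log_mul, symmMulLog]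
  rw [show (m * (1 + s) + m * (1 - s)) / 2 = m by ring]
  field_simp
  ring

lemma exists_eq_mul_one_add_mul_one_sub {a b : ℝ} (ha : 0 ≤ a) (hb : 0 ≤ b) :
    ∃ m s : ℝ, 0 ≤ m ∧ |s| ≤ 1 ∧ a = m * (1 + s) ∧ b = m * (1 - s) := by
  rcases (add_nonneg ha hb).eq_or_lt with h | h
  · exact ⟨0, 0, le_rfl, by simp, by linarith, by linarith⟩
  refine ⟨(a + b) / 2, (a - b) / (a + b), by positivity, ?_, ?_, ?_⟩
  · rw [abs_div, abs_of_pos h, div_le_one h, abs_le]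
    constructor <;> linarith
  all_goals field_simp; ring

lemma entPair_noise_le {e a b : ℝ} (he0 : 0 ≤ e) (he1 : e ≤ 1) (ha : 0 ≤ a) (hb : 0 ≤ b) :
    entPair ((1 - e) * a + e * b) (e * a + (1 - e) * b) ≤ (1 - 2 * e) ^ 2 * entPair a b := by
  obtain ⟨m, s, hm, hs, rfl, rfl⟩ := exists_eq_mul_one_add_mul_one_sub ha hb
  have hr : |1 - 2 * e| ≤ 1 := abs_le.2 ⟨by linarith, by linarith⟩
  rw [show (1 - e) * (m * (1 + s)) + e * (m * (1 - s)) = m * (1 + (1 - 2 * e) * s) by ring,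
    show e * (m * (1 + s)) + (1 - e) * (m * (1 - s)) = m * (1 - (1 - 2 * e) * s) by ring,
    entPair_mul_one_add_mul_one_sub, entPair_mul_one_add_mul_one_sub, ← mul_div_assoc,
    mul_left_comm]
  gcongr
  exact symmMulLog_mul_le hr hs

section Cube

variable {n : ℕ}

def flipAt (m : Fin n) (x : Cube n) : Cube n := Function.update x m (!x m)

@[simp]
lemma flipAt_apply_self (m : Fin n) (x : Cube n) : flipAt m x m = !x m :=
  Function.update_self _ _ _

lemma flipAt_apply_of_ne {m i : Fin n} (x : Cube n) (h : i ≠ m) : flipAt m x i = x i :=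
  Function.update_of_ne h _ _

@[simp]
lemma flipAt_flipAt (m : Fin n) (x : Cube n) : flipAt m (flipAt m x) = x := by
  simp [flipAt]

lemma flipAt_involutive (m : Fin n) : Function.Involutive (flipAt m) :=
  flipAt_flipAt m

lemma flipAt_apply_eq_flipAt_apply_iff (m i : Fin n) (x y : Cube n) :
    flipAt m y i = flipAt m x i ↔ y i = x i := by
  rcases eq_or_ne i m with rfl | h
  · simp
  · rw [flipAt_apply_of_ne x h, flipAt_apply_of_ne y h]

lemma sum_comp_flipAt (m : Fin n) (g : Cube n → ℝ) :
    ∑ x, g (flipAt m x) = ∑ x, g x :=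
  (flipAt_involutive m).bijective.sum_comp g

lemma EX_comp_flipAt (m : Fin n) (g : Cube n → ℝ) : EX (fun x => g (flipAt m x)) = EX g := by
  rw [EX, sum_comp_flipAt, EX]

lemma EX_add (f g : Cube n → ℝ) : EX (fun x => f x + g x) = EX f + EX g := by
  simp only [EX, sum_add_distrib, add_div]

lemma EX_sub (f g : Cube n → ℝ) : EX (fun x => f x - g x) = EX f - EX g := by
  simp only [EX, sum_sub_distrib, sub_div]

lemma EX_const_mul (c : ℝ) (f : Cube n → ℝ) : EX (fun x => c * f x) = c * EX f := by
  simp only [EX, ← mul_sum, mul_div_assoc]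

lemma EX_mono {f g : Cube n → ℝ} (h : ∀ x, f x ≤ g x) : EX f ≤ EX g :=
  div_le_div_of_nonneg_right (sum_le_sum fun x _ => h x) (by positivity)

/-- For `e = 1/2` this is the conditional expectation given all coordinates but `m`. -/
noncomputable def noiseAt (e : ℝ) (m : Fin n) (h : Cube n → ℝ) : Cube n → ℝ :=
  fun x => (1 - e) * h x + e * h (flipAt m x)

lemma noiseAt_half_apply (m : Fin n) (h : Cube n → ℝ) (x : Cube n) :
    noiseAt (1 / 2) m h x = (h x + h (flipAt m x)) / 2 := by
  simp only [noiseAt]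
  ring

lemma noiseAt_nonneg {e : ℝ} (he0 : 0 ≤ e) (he1 : e ≤ 1) (m : Fin n) {h : Cube n → ℝ}
    (hh : ∀ x, 0 ≤ h x) (x : Cube n) : 0 ≤ noiseAt e m h x := by
  have := hh x
  have := hh (flipAt m x)
  simp only [noiseAt]
  nlinarith

lemma noiseAt_half_noiseAt (e : ℝ) (m : Fin n) (h : Cube n → ℝ) :
    noiseAt (1 / 2) m (noiseAt e m h) = noiseAt (1 / 2) m h := by
  funext x
  simp only [noiseAt, flipAt_flipAt]
  ring

lemma EX_noiseAt_half (m : Fin n) (h : Cube n → ℝ) : EX (noiseAt (1 / 2) m h) = EX h := by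
  simp only [EX, noiseAt, sum_add_distrib, ← mul_sum, sum_comp_flipAt m h]
  ring

/-- The chain rule for entropy, conditioning on all coordinates but `m`. -/
lemma Ent_eq_Ent_noiseAt_half_add (m : Fin n) (h : Cube n → ℝ) :
    Ent h = Ent (noiseAt (1 / 2) m h) + EX (fun x => entPair (h x) (h (flipAt m x))) := by
  have hpair : EX (fun x => entPair (h x) (h (flipAt m x))) =
      EX (fun x => 1 / 2 * (h x * logb 2 (h x)) +
          1 / 2 * (h (flipAt m x) * logb 2 (h (flipAt m x))) -
        noiseAt (1 / 2) m h x * logb 2 (noiseAt (1 / 2) m h x)) := by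
    congr 1
    funext x
    rw [noiseAt_half_apply, entPair]
    ring
  rw [hpair, EX_sub, EX_add, EX_const_mul, EX_const_mul,
    EX_comp_flipAt m (fun x => h x * logb 2 (h x)), Ent, Ent, EX_noiseAt_half]
  ring

lemma Ent_noiseAt_le {e : ℝ} (he0 : 0 ≤ e) (he1 : e ≤ 1) (m : Fin n) {h : Cube n → ℝ}
    (hh : ∀ x, 0 ≤ h x) :
    Ent (noiseAt e m h) ≤
      (1 - (1 - 2 * e) ^ 2) * Ent (noiseAt (1 / 2) m h) + (1 - 2 * e) ^ 2 * Ent h := by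
  have hpair : EX (fun x => entPair (noiseAt e m h x) (noiseAt e m h (flipAt m x))) ≤
      (1 - 2 * e) ^ 2 * EX (fun x => entPair (h x) (h (flipAt m x))) := by
    rw [← EX_const_mul]
    refine EX_mono fun x => ?_
    have := entPair_noise_le he0 he1 (hh x) (hh (flipAt m x))
    simp only [noiseAt, flipAt_flipAt]
    convert this using 2
    ring
  have hchain := Ent_eq_Ent_noiseAt_half_add m (noiseAt e m h)
  rw [noiseAt_half_noiseAt] at hchain
  rw [hchain, Ent_eq_Ent_noiseAt_half_add m h]
  linarith

lemma forall_notMem_insert_iff {α : Type*} [DecidableEq α] {A : Finset α} {m : α} (hm : m ∉ A)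
    (P : α → Prop) : (∀ i ∉ A, P i) ↔ P m ∧ ∀ i ∉ insert m A, P i := by
  simp only [mem_insert, not_or]
  exact ⟨fun h => ⟨h m hm, fun i hi => h i hi.2⟩,
    fun h i hi => (eq_or_ne i m).elim (fun him => him ▸ h.1) fun him => h.2 i ⟨him, hi⟩⟩

noncomputable def noiseKernel (e : ℝ) (A : Finset (Fin n)) (x y : Cube n) : ℝ :=
  if ∀ i ∉ A, y i = x i then ∏ i ∈ A, (if y i = x i then 1 - e else e) else 0

lemma noiseOpOn_apply (e : ℝ) (A : Finset (Fin n)) (g : Cube n → ℝ) (x : Cube n) :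
    noiseOpOn e A g x = ∑ y, noiseKernel e A x y * g y := rfl

lemma noiseKernel_flipAt_flipAt (e : ℝ) (A : Finset (Fin n)) (m : Fin n) (x y : Cube n) :
    noiseKernel e A (flipAt m x) (flipAt m y) = noiseKernel e A x y := by
  simp only [noiseKernel, flipAt_apply_eq_flipAt_apply_iff]

lemma noiseKernel_insert (e : ℝ) {A : Finset (Fin n)} {m : Fin n} (hm : m ∉ A) (x y : Cube n) :
    noiseKernel e (insert m A) x y =
      (1 - e) * noiseKernel e A x y + e * noiseKernel e A x (flipAt m y) := by
  have hprod : ∏ i ∈ A, (if flipAt m y i = x i then 1 - e else e) =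
      ∏ i ∈ A, (if y i = x i then 1 - e else e) :=
    prod_congr rfl fun i hi => by rw [flipAt_apply_of_ne y (ne_of_mem_of_not_mem hi hm)]
  have hoff : (∀ i ∉ insert m A, flipAt m y i = x i) ↔ ∀ i ∉ insert m A, y i = x i :=
    forall₂_congr fun i hi => by
      rw [flipAt_apply_of_ne y (ne_of_mem_of_not_mem (mem_insert_self m A) hi).symm]
  simp only [noiseKernel, forall_notMem_insert_iff hm (fun i => y i = x i),
    forall_notMem_insert_iff hm (fun i => flipAt m y i = x i), hoff, hprod, prod_insert hm,
    flipAt_apply_self]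
  cases y m <;> cases x m <;> simp

lemma noiseOpOn_comp_flipAt (e : ℝ) (A : Finset (Fin n)) (m : Fin n) (g : Cube n → ℝ)
    (x : Cube n) : noiseOpOn e A (fun z => g (flipAt m z)) x = noiseOpOn e A g (flipAt m x) := by
  rw [noiseOpOn_apply, noiseOpOn_apply,
    ← sum_comp_flipAt m (fun y => noiseKernel e A (flipAt m x) y * g y)]
  simp only [noiseKernel_flipAt_flipAt]

lemma noiseOpOn_mul_add_mul (e : ℝ) (A : Finset (Fin n)) (c d : ℝ) (g h : Cube n → ℝ)
    (x : Cube n) :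
    noiseOpOn e A (fun z => c * g z + d * h z) x =
      c * noiseOpOn e A g x + d * noiseOpOn e A h x := by
  simp only [noiseOpOn_apply, mul_sum, ← sum_add_distrib]
  exact sum_congr rfl fun y _ => by ring

lemma noiseOpOn_noiseAt (e d : ℝ) (A : Finset (Fin n)) (m : Fin n) (g : Cube n → ℝ) :
    noiseOpOn e A (noiseAt d m g) = noiseAt d m (noiseOpOn e A g) := by
  funext x
  unfold noiseAt
  rw [noiseOpOn_mul_add_mul, noiseOpOn_comp_flipAt]

lemma noiseOpOn_insert (e : ℝ) {A : Finset (Fin n)} {m : Fin n} (hm : m ∉ A)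
    (g : Cube n → ℝ) :
    noiseOpOn e (insert m A) g = noiseOpOn e A (noiseAt e m g) := by
  funext x
  unfold noiseAt
  rw [noiseOpOn_mul_add_mul, noiseOpOn_apply, noiseOpOn_apply, noiseOpOn_apply,
    ← sum_comp_flipAt m (fun y => noiseKernel e A x y * g (flipAt m y))]
  simp only [noiseKernel_insert e hm, flipAt_flipAt, mul_sum, ← sum_add_distrib]
  exact sum_congr rfl fun y _ => by ring

lemma noiseKernel_nonneg {e : ℝ} (he0 : 0 ≤ e) (he1 : e ≤ 1) (A : Finset (Fin n))
    (x y : Cube n) : 0 ≤ noiseKernel e A x y := by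
  unfold noiseKernel
  split_ifs
  · exact prod_nonneg fun i _ => by split_ifs <;> linarith
  · exact le_rfl

lemma noiseOpOn_nonneg {e : ℝ} (he0 : 0 ≤ e) (he1 : e ≤ 1) (A : Finset (Fin n))
    {g : Cube n → ℝ} (hg : ∀ x, 0 ≤ g x) (x : Cube n) : 0 ≤ noiseOpOn e A g x :=
  sum_nonneg fun y _ => mul_nonneg (noiseKernel_nonneg he0 he1 A x y) (hg y)

lemma noiseOpOn_empty (e : ℝ) (g : Cube n → ℝ) : noiseOpOn e ∅ g = g := by
  funext x
  rw [noiseOpOn_apply, sum_eq_single x]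
  · simp [noiseKernel]
  · intro y _ hy
    rw [noiseKernel, if_neg fun h => hy (funext fun i => h i (notMem_empty i)), zero_mul]
  · exact fun h => absurd (mem_univ x) h

lemma noiseOpOn_univ (e : ℝ) (g : Cube n → ℝ) : noiseOpOn e univ g = noiseOp e g := by
  funext x
  rw [noiseOpOn_apply, noiseOp]
  refine sum_congr rfl fun y _ => ?_
  have hcard : #{i | y i = x i} = n - hammingDist y x := by
    have := card_filter_add_card_filter_not (s := univ) (fun i => y i = x i)
    rw [card_univ, Fintype.card_fin] at this
    rw [hammingDist]
    simp only [ne_eq]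
    omega
  rw [noiseKernel, if_pos fun i hi => absurd (mem_univ i) hi, prod_ite, prod_const, prod_const,
    hcard, hammingDist, mul_comm ((1 - e) ^ _)]

lemma condE_apply (f : Cube n → ℝ) (S : Finset (Fin n)) (x : Cube n) :
    condE f S x = (∑ z, f (S.piecewise x z)) / 2 ^ n := rfl

lemma condE_univ (f : Cube n → ℝ) : condE f univ = f := by
  funext x
  simp [condE_apply]

lemma piecewise_erase_of_apply_eq {S : Finset (Fin n)} {m : Fin n} (hm : m ∈ S) {x w : Cube n}
    (h : w m = x m) : (S.erase m).piecewise x w = S.piecewise x w := by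
  ext i
  rcases eq_or_ne i m with rfl | hi <;> simp [Finset.piecewise, *]

lemma piecewise_erase_of_apply_ne {S : Finset (Fin n)} {m : Fin n} (hm : m ∈ S) {x w : Cube n}
    (h : w m ≠ x m) : (S.erase m).piecewise x w = flipAt m (S.piecewise x w) := by
  ext i
  rcases eq_or_ne i m with rfl | hi
  · simpa [Finset.piecewise, hm] using Bool.eq_not.mpr h
  · simp [Finset.piecewise, flipAt_apply_of_ne _ hi, hi]

lemma piecewise_flipAt_of_mem {S : Finset (Fin n)} {m : Fin n} (hm : m ∈ S) (x w : Cube n) :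
    S.piecewise x (flipAt m w) = S.piecewise x w := by
  ext i
  rcases eq_or_ne i m with rfl | hi <;> simp [Finset.piecewise, flipAt_apply_of_ne, *]

lemma condE_noiseAt_half {m : Fin n} {S : Finset (Fin n)} (hm : m ∈ S) (f : Cube n → ℝ) :
    condE (noiseAt (1 / 2) m f) S = condE f (S.erase m) := by
  funext x
  rw [condE_apply, condE_apply]
  congr 1
  -- `z` and `flipAt m z` glue to the same point on `S`, but to the two points of the edge
  -- through it on `S.erase m`.
  have hpair : ∀ z, f ((S.erase m).piecewise x z) + f ((S.erase m).piecewise x (flipAt m z)) =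
      2 * noiseAt (1 / 2) m f (S.piecewise x z) := by
    intro z
    rw [noiseAt_half_apply]
    by_cases hz : z m = x m
    · rw [piecewise_erase_of_apply_eq hm hz, piecewise_erase_of_apply_ne hm (by simp [hz]),
        piecewise_flipAt_of_mem hm]
      ring
    · have hz' : flipAt m z m = x m := by
        rw [flipAt_apply_self]
        exact (Bool.eq_not.mpr (Ne.symm hz)).symm
      rw [piecewise_erase_of_apply_ne hm hz, piecewise_erase_of_apply_eq hm hz',
        piecewise_flipAt_of_mem hm]
      ring
  calc ∑ z, noiseAt (1 / 2) m f (S.piecewise x z)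
      = (∑ z, f ((S.erase m).piecewise x z) +
          ∑ z, f ((S.erase m).piecewise x (flipAt m z))) / 2 := by
        rw [← sum_add_distrib, sum_div]
        exact sum_congr rfl fun z _ => by rw [hpair]; ring
    _ = ∑ z, f ((S.erase m).piecewise x z) := by
        rw [sum_comp_flipAt m (fun z => f ((S.erase m).piecewise x z))]
        ring

end Cube

section SubsetExp

variable {α : Type*}

noncomputable def subsetExp (l : ℝ) (A : Finset α) (g : Finset α → ℝ) : ℝ :=
  ∑ T ∈ A.powerset, l ^ #T * (1 - l) ^ (#A - #T) * g T

lemma subsetExp_congr (l : ℝ) {A : Finset α} {g g' : Finset α → ℝ}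
    (h : ∀ T ⊆ A, g T = g' T) : subsetExp l A g = subsetExp l A g' :=
  sum_congr rfl fun T hT => by rw [h T (mem_powerset.1 hT)]

lemma subsetExp_insert [DecidableEq α] (l : ℝ) {A : Finset α} {m : α} (hm : m ∉ A)
    (g : Finset α → ℝ) :
    subsetExp l (insert m A) g =
      (1 - l) * subsetExp l A g + l * subsetExp l A (fun T => g (insert m T)) := by
  rw [subsetExp, sum_powerset_insert hm, subsetExp, subsetExp, mul_sum, mul_sum]
  congr 1 <;> refine sum_congr rfl fun T hT => ?_
  · have hTA := card_le_card (mem_powerset.1 hT)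
    rw [card_insert_of_notMem hm, Nat.sub_add_comm hTA, pow_succ]
    ring
  · have hmT : m ∉ T := fun h => hm (mem_powerset.1 hT h)
    rw [card_insert_of_notMem hm, card_insert_of_notMem hmT, Nat.add_sub_add_right, pow_succ]
    ring

end SubsetExp

lemma ETsub_eq_subsetExp {n : ℕ} (l : ℝ) (g : Finset (Fin n) → ℝ) :
    ETsub l g = subsetExp l univ g := by
  rw [ETsub, subsetExp, powerset_univ, card_univ, Fintype.card_fin]

theorem Ent_noiseOpOn_le {n : ℕ} {e : ℝ} (he0 : 0 ≤ e) (he1 : e ≤ 1) (A : Finset (Fin n))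
    {f : Cube n → ℝ} (hf : ∀ x, 0 ≤ f x) :
    Ent (noiseOpOn e A f) ≤ subsetExp ((1 - 2 * e) ^ 2) A (fun T => EntC f (T ∪ Aᶜ)) := by
  induction A using Finset.induction_on generalizing f with
  | empty =>
    simp [noiseOpOn_empty, subsetExp, EntC, condE_univ]
  | @insert m A hm ih =>
    set l := (1 - 2 * e) ^ 2
    have hl0 : 0 ≤ l := sq_nonneg _
    have hl1 : l ≤ 1 := by nlinarith
    calc Ent (noiseOpOn e (insert m A) f)
        = Ent (noiseAt e m (noiseOpOn e A f)) := by
          rw [noiseOpOn_insert e hm, noiseOpOn_noiseAt]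
      _ ≤ (1 - l) * Ent (noiseAt (1 / 2) m (noiseOpOn e A f)) + l * Ent (noiseOpOn e A f) :=
          Ent_noiseAt_le he0 he1 m (noiseOpOn_nonneg he0 he1 A hf)
      _ = (1 - l) * Ent (noiseOpOn e A (noiseAt (1 / 2) m f)) + l * Ent (noiseOpOn e A f) := by
          rw [noiseOpOn_noiseAt]
      _ ≤ (1 - l) * subsetExp l A (fun T => EntC (noiseAt (1 / 2) m f) (T ∪ Aᶜ)) +
            l * subsetExp l A (fun T => EntC f (T ∪ Aᶜ)) := by
          have := sub_nonneg.2 hl1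
          gcongr
          · exact ih (noiseAt_nonneg (by norm_num) (by norm_num) m hf)
          · exact ih hf
      _ = subsetExp l (insert m A) (fun T => EntC f (T ∪ (insert m A)ᶜ)) := by
          rw [subsetExp_insert l hm]
          congr 2 <;> refine subsetExp_congr l fun T hT => ?_
          · have hmT : m ∉ T := fun h => hm (hT h)
            rw [EntC, condE_noiseAt_half (by simp [hm]), EntC]
            congr 2
            ext i
            rcases eq_or_ne i m with rfl | hi <;> simp [*]
          · congr 1
            ext i
            rcases eq_or_ne i m with rfl | hi <;> simp [*]

theorem stmt5_general {n : ℕ} (ε : ℝ) (hε0 : 0 ≤ ε) (hε1 : ε ≤ 1 / 2)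
    (f : Cube n → ℝ) (hf : ∀ x, 0 ≤ f x) :
    Ent (noiseOp ε f) ≤ ETsub ((1 - 2 * ε) ^ 2) (fun T => EntC f T) := by
  simpa only [noiseOpOn_univ, ETsub_eq_subsetExp, compl_univ, union_empty] using
    Ent_noiseOpOn_le hε0 (by linarith) univ hf

/-- for nonnegative `f` with `E f = 1` and `T` a random subset of `[n]`
including each `i` independently with probability `(1-2ε)²`,
`Ent(T_ε f) ≤ E_T Ent(f|T)`. -/
theorem stmt5 {n : ℕ} (ε : ℝ) (hε0 : 0 ≤ ε) (hε1 : ε ≤ 1 / 2)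
    (f : Cube n → ℝ) (hf : ∀ x, 0 ≤ f x) (hEf : EX f = 1) :
    Ent (noiseOp ε f) ≤ ETsub ((1 - 2 * ε) ^ 2) (fun T => EntC f T) :=
  stmt5_general ε hε0 hε1 f hf
end

section
/- Let n ≥ 2, let 1 ≤ s ≤ n−1 be an integer, and let 0 < λ < 1. Then Σ_{k=s}^{n−1} Λ(k,s,λ) = (n − s/λ) + (1/λ)·Σ_{j=0}^{s−1} Σ_{t=0}^{j} C(n,t)·λ^t·(1−λ)^{n−t}, where Λ(k,s,λ) = 1 − Σ_{j=0}^{s−1} C(k,j)·λ^j·(1−λ)^{k−j}. -/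
open Finset

/-!
With `F_k(j) = P(Bin(k, λ) ≤ j)` and `p_k(j) = P(Bin(k, λ) = j)`, one has
`Λ(k, s, λ) = 1 - ∑_{j<s} p_k(j)` and `F_{k+1}(j) = F_k(j) - λ p_k(j)`. Hence
`λ Λ(k, s, λ) = λ + ∑_{j<s} (F_{k+1}(j) - F_k(j))`, and summing over `s ≤ k < n` telescopes to
`λ (n - s) + ∑_{j<s} F_n(j) - ∑_{j<s} F_s(j)`. The last sum is `s - E Bin(s, λ) = s (1 - λ)`.
-/

section Binomial

variable (l : ℝ)

noncomputable def binomPMF (k t : ℕ) : ℝ :=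
  (k.choose t : ℝ) * l ^ t * (1 - l) ^ (k - t)

noncomputable def binomCDF (k j : ℕ) : ℝ :=
  ∑ t ∈ range (j + 1), binomPMF l k t

theorem binomPMF_succ_zero (k : ℕ) : binomPMF l (k + 1) 0 = (1 - l) * binomPMF l k 0 := by
  simp only [binomPMF, Nat.choose_zero_right, Nat.sub_zero, pow_succ]
  ring

theorem binomPMF_succ_succ (k t : ℕ) :
    binomPMF l (k + 1) (t + 1) = l * binomPMF l k t + (1 - l) * binomPMF l k (t + 1) := by
  rcases lt_or_ge k (t + 1) with hkt | htk
  · simp only [binomPMF, Nat.choose_succ_succ, Nat.choose_eq_zero_of_lt hkt,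
      Nat.add_sub_add_right]
    push_cast
    ring
  · obtain ⟨d, rfl⟩ := Nat.exists_eq_add_of_le htk
    simp only [binomPMF, Nat.choose_succ_succ, show t + 1 + d - t = d + 1 by omega,
      show t + 1 + d + 1 - (t + 1) = d + 1 by omega, show t + 1 + d - (t + 1) = d by omega]
    push_cast
    ring

theorem binomCDF_self (k : ℕ) : binomCDF l k k = 1 :=
  calc _ = (l + (1 - l)) ^ k := by
        rw [add_pow]
        exact sum_congr rfl fun t _ => by rw [binomPMF]; ring
    _ = 1 := by simp

theorem binomCDF_succ (k j : ℕ) : binomCDF l k (j + 1) = binomCDF l k j + binomPMF l k (j + 1) :=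
  sum_range_succ _ _

theorem binomCDF_succ_left (k j : ℕ) :
    binomCDF l (k + 1) j = binomCDF l k j - l * binomPMF l k j := by
  induction j with
  | zero => simp only [binomCDF, zero_add, sum_range_one, binomPMF_succ_zero]; ring
  | succ j ih =>
    rw [binomCDF_succ, binomCDF_succ, ih, binomPMF_succ_succ]
    ring

theorem sum_binomCDF_range_self (s : ℕ) : ∑ j ∈ range s, binomCDF l s j = s * (1 - l) := by
  induction s with
  | zero => simp
  | succ s ih =>
    simp only [binomCDF_succ_left, sum_sub_distrib, ← mul_sum]
    rw [← binomCDF, binomCDF_self, sum_range_succ, ih, binomCDF_self]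
    push_cast
    ring

end Binomial

theorem Lam_eq_one_sub_sum_binomPMF (k s : ℕ) (l : ℝ) :
    Lam k s l = 1 - ∑ j ∈ range s, binomPMF l k j :=
  rfl

theorem mul_sum_Lam_Ico (l : ℝ) {s m : ℕ} (hsm : s ≤ m) :
    l * ∑ k ∈ Ico s m, Lam k s l = l * m - s + ∑ j ∈ range s, binomCDF l m j := by
  induction m, hsm using Nat.le_induction with
  | base => rw [Ico_self, sum_empty, mul_zero, sum_binomCDF_range_self]; ring
  | succ m hsm ih =>
    rw [sum_Ico_succ_top hsm, mul_add, ih]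
    simp only [Lam_eq_one_sub_sum_binomPMF, binomCDF_succ_left, sum_sub_distrib, ← mul_sum]
    push_cast
    ring

theorem stmt12_general (n s : ℕ) (hn : 2 ≤ n) (hsn : s ≤ n - 1)
    (l : ℝ) (hl0 : 0 < l) :
    ∑ k ∈ Finset.Icc s (n - 1), Lam k s l =
      ((n : ℝ) - (s : ℝ) / l) +
        (1 / l) * ∑ j ∈ Finset.range s, ∑ t ∈ Finset.range (j + 1),
          (Nat.choose n t : ℝ) * l ^ t * (1 - l) ^ (n - t) := by
  obtain ⟨m, rfl⟩ : ∃ m, n = m + 1 := ⟨n - 1, by omega⟩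
  have key := mul_sum_Lam_Ico l (show s ≤ m + 1 by omega)
  rw [Nat.add_sub_cancel, ← Ico_add_one_right_eq_Icc]
  simp only [binomCDF, binomPMF] at key
  field_simp
  linarith

/-- for `n ≥ 2`, `1 ≤ s ≤ n-1` and `0 < λ < 1`,
`∑_{k=s}^{n-1} Λ(k,s,λ) = (n - s/λ) + (1/λ) ∑_{j=0}^{s-1} ∑_{t=0}^{j} C(n,t) λ^t (1-λ)^{n-t}`. -/
theorem stmt12 (n s : ℕ) (hn : 2 ≤ n) (hs1 : 1 ≤ s) (hsn : s ≤ n - 1)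
    (l : ℝ) (hl0 : 0 < l) (hl1 : l < 1) :
    ∑ k ∈ Finset.Icc s (n - 1), Lam k s l =
      ((n : ℝ) - (s : ℝ) / l) +
        (1 / l) * ∑ j ∈ Finset.range s, ∑ t ∈ Finset.range (j + 1),
          (Nat.choose n t : ℝ) * l ^ t * (1 - l) ^ (n - t) :=
  stmt12_general n s hn hsn l hl0
end

section
/- Let f : {0,1}^n → ℝ be nonnegative. For every integer 0 ≤ u ≤ n−1: E_{|B| = u+1} Ent(f | B) − (u+1)·E_{i∈{1,…,n}} Ent(f | {i}) = Σ_{s=1}^{u} (u − s + 1)·t_s, where the first expectation is over subsets B ⊆ {1,…,n} of cardinality u+1 chosen uniformly, the second over a uniform index i, and t_s is the average of Z_{S;i,j}(f) over subsets S ⊆ {1,…,n} with |S| = s−1 and over distinct i,j ∉ S. -/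
/-!
Let `a k` be the average of `Ent(f | S)` over `|S| = k`; then `a 0 = 0`. Double counting the
triples `(S, i, j)` with `|S| = s - 1` and distinct `i, j ∉ S` shows
`t_s = a (s+1) - 2 a s + a (s-1)`: every `(s+1)`-set is `S ∪ {i, j}` for `s (s+1)` triples, and
every `s`-set is `S ∪ {i}` for `s (n-s)` of them. Summation by parts then turns
`∑ (u - s + 1) t_s` into `a (u+1) - (u+1) a 1`.
-/

open Finset

section LayerAverages

variable {α : Type*} [Fintype α]

noncomputable def layerAvg (g : Finset α → ℝ) (k : ℕ) : ℝ :=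
  (∑ S ∈ powersetCard k univ, g S) / ((Fintype.card α).choose k : ℝ)

lemma filter_card_eq_eq_powersetCard (k : ℕ) :
    (univ : Finset (Finset α)).filter (fun S => S.card = k) = powersetCard k univ := by
  ext S
  simp

lemma sum_powersetCard_eq_choose_mul_layerAvg (g : Finset α → ℝ) (k : ℕ) :
    ∑ S ∈ powersetCard k univ, g S = ((Fintype.card α).choose k : ℝ) * layerAvg g k := by
  by_cases hk : (Fintype.card α).choose k = 0
  · have : powersetCard k (univ : Finset α) = ∅ := by
      rw [← card_eq_zero, card_powersetCard, card_univ, hk]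
    simp [this, hk]
  · rw [layerAvg, mul_div_cancel₀ _ (by exact_mod_cast hk)]

lemma layerAvg_zero (g : Finset α → ℝ) : layerAvg g 0 = g ∅ := by
  simp [layerAvg]

lemma layerAvg_one (g : Finset α → ℝ) :
    layerAvg g 1 = (∑ i, g {i}) / (Fintype.card α : ℝ) := by
  simp [layerAvg, powersetCard_one]

end LayerAverages

section DoubleCounting

variable {α M : Type*} [DecidableEq α] [AddCommMonoid M]

lemma sum_sum_sdiff_singleton_comm (s : Finset α) (F : α → α → M) :
    ∑ i ∈ s, ∑ j ∈ s \ {i}, F i j = ∑ j ∈ s, ∑ i ∈ s \ {j}, F i j := by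
  refine sum_comm' fun i j => ?_
  simp only [mem_sdiff, mem_singleton]
  exact ⟨fun ⟨hi, hj, hji⟩ => ⟨⟨hi, Ne.symm hji⟩, hj⟩,
    fun ⟨⟨hi, hij⟩, hj⟩ => ⟨hi, hj, Ne.symm hij⟩⟩

variable [Fintype α]

lemma sum_powersetCard_sum_compl_insert (g : Finset α → M) (m : ℕ) :
    ∑ S ∈ powersetCard m univ, ∑ i ∈ Sᶜ, g (insert i S) =
      (m + 1) • ∑ B ∈ powersetCard (m + 1) univ, g B := by
  have hB : ∀ B ∈ powersetCard (m + 1) (univ : Finset α), (m + 1) • g B = ∑ _i ∈ B, g B := by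
    intro B hB
    rw [sum_const, mem_powersetCard_univ.1 hB]
  rw [smul_sum, sum_congr rfl hB, sum_sigma', sum_sigma']
  refine sum_nbij' (fun p => ⟨insert p.2 p.1, p.2⟩) (fun p => ⟨p.1.erase p.2, p.2⟩)
    ?_ ?_ ?_ ?_ fun _ _ => rfl
  · rintro ⟨S, i⟩ h
    simp only [mem_sigma, mem_powersetCard_univ, mem_compl] at h ⊢
    exact ⟨by rw [card_insert_of_notMem h.2, h.1], mem_insert_self _ _⟩
  · rintro ⟨B, i⟩ h
    simp only [mem_sigma, mem_powersetCard_univ, mem_compl] at h ⊢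
    exact ⟨by rw [card_erase_of_mem h.2, h.1, Nat.add_sub_cancel], notMem_erase _ _⟩
  · rintro ⟨S, i⟩ h
    simp only [mem_sigma, mem_compl] at h
    simp [erase_insert h.2]
  · rintro ⟨B, i⟩ h
    simp only [mem_sigma] at h
    simp [insert_erase h.2]

lemma sum_compl_sum_sdiff_singleton_const (S : Finset α) (c : α → M) :
    ∑ i ∈ Sᶜ, ∑ _j ∈ Sᶜ \ {i}, c i = (Fintype.card α - S.card - 1) • ∑ i ∈ Sᶜ, c i := by
  rw [smul_sum]
  refine sum_congr rfl fun i hi => ?_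
  rw [sum_const, card_sdiff_of_subset (singleton_subset_iff.2 hi), card_singleton, card_compl]

lemma sum_powersetCard_sum_pairs_insert_insert (g : Finset α → M) (m : ℕ) :
    ∑ S ∈ powersetCard m univ, ∑ i ∈ Sᶜ, ∑ j ∈ Sᶜ \ {i}, g (insert i (insert j S)) =
      ((m + 1) * (m + 2)) • ∑ B ∈ powersetCard (m + 2) univ, g B := by
  have hswap : ∀ S : Finset α, ∑ i ∈ Sᶜ, ∑ j ∈ Sᶜ \ {i}, g (insert i (insert j S)) =
      ∑ j ∈ Sᶜ, ∑ i ∈ (insert j S)ᶜ, g (insert i (insert j S)) := by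
    intro S
    rw [sum_sum_sdiff_singleton_comm]
    simp only [compl_insert, erase_eq]
  simp only [hswap]
  rw [sum_powersetCard_sum_compl_insert (fun T => ∑ i ∈ Tᶜ, g (insert i T)),
    sum_powersetCard_sum_compl_insert g, smul_smul, mul_comm]

end DoubleCounting

lemma choose_add_two_mul (N m : ℕ) :
    N.choose (m + 2) * ((m + 1) * (m + 2)) = N.choose m * (N - m) * (N - m - 1) := by
  have h1 := Nat.choose_succ_right_eq N m
  have h2 := Nat.choose_succ_right_eq N (m + 1)
  calc N.choose (m + 2) * ((m + 1) * (m + 2))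
      = N.choose (m + 1 + 1) * (m + 1 + 1) * (m + 1) := by ring
    _ = N.choose (m + 1) * (m + 1) * (N - m - 1) := by rw [h2, Nat.sub_add_eq]; ring
    _ = N.choose m * (N - m) * (N - m - 1) := by rw [h1]

section SecondDifference

variable {α : Type*} [Fintype α] [DecidableEq α]

lemma sum_powersetCard_pairs_secondDiff (g : Finset α → ℝ) (m : ℕ) :
    ∑ S ∈ powersetCard m univ, ∑ i ∈ Sᶜ, ∑ j ∈ Sᶜ \ {i},
        (g (insert i (insert j S)) - g (insert i S) - g (insert j S) + g S) =
      (((Fintype.card α).choose m * (Fintype.card α - m) * (Fintype.card α - m - 1) : ℕ) : ℝ) *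
        (layerAvg g (m + 2) - 2 * layerAvg g (m + 1) + layerAvg g m) := by
  set N := Fintype.card α with hN
  have hcompl : ∀ S ∈ powersetCard m (univ : Finset α), N - S.card = N - m := fun S hS => by
    rw [mem_powersetCard_univ.1 hS]
  have hi : ∑ S ∈ powersetCard m univ, ∑ i ∈ Sᶜ, ∑ _j ∈ Sᶜ \ {i}, g (insert i S) =
      ((m + 1) * (N - m - 1) : ℕ) • ∑ B ∈ powersetCard (m + 1) univ, g B := by
    rw [sum_congr rfl fun S hS => by
      rw [sum_compl_sum_sdiff_singleton_const S fun i => g (insert i S), hcompl S hS],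
      ← smul_sum, sum_powersetCard_sum_compl_insert, smul_smul, mul_comm]
  have hj : ∑ S ∈ powersetCard m univ, ∑ i ∈ Sᶜ, ∑ j ∈ Sᶜ \ {i}, g (insert j S) =
      ((m + 1) * (N - m - 1) : ℕ) • ∑ B ∈ powersetCard (m + 1) univ, g B := by
    rw [sum_congr rfl fun S _ => sum_sum_sdiff_singleton_comm Sᶜ fun _ j => g (insert j S)]
    exact hi
  have h0 : ∑ S ∈ powersetCard m univ, ∑ i ∈ Sᶜ, ∑ _j ∈ Sᶜ \ {i}, g S =
      ((N - m) * (N - m - 1) : ℕ) • ∑ S ∈ powersetCard m univ, g S := by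
    rw [smul_sum]
    refine sum_congr rfl fun S hS => ?_
    rw [sum_compl_sum_sdiff_singleton_const S fun _ => g S, hcompl S hS, sum_const, card_compl,
      hcompl S hS, smul_smul, mul_comm]
  simp only [sum_add_distrib, sum_sub_distrib, sum_powersetCard_sum_pairs_insert_insert, hi, hj,
    h0, sum_powersetCard_eq_choose_mul_layerAvg, nsmul_eq_mul]
  have e2 : (N.choose (m + 2) : ℝ) * ((m + 1) * (m + 2) : ℕ) =
      (N.choose m * (N - m) * (N - m - 1) : ℕ) := by
    exact_mod_cast choose_add_two_mul N m
  have e1 : (N.choose (m + 1) : ℝ) * ((m + 1) * (N - m - 1) : ℕ) =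
      (N.choose m * (N - m) * (N - m - 1) : ℕ) := by
    rw [← Nat.cast_mul, ← mul_assoc, Nat.choose_succ_right_eq]
  rw [← hN]
  push_cast at e1 e2 ⊢
  linear_combination layerAvg g (m + 2) * e2 - 2 * layerAvg g (m + 1) * e1

lemma sum_powersetCard_pairs_card (m : ℕ) :
    ∑ S ∈ powersetCard m (univ : Finset α), ∑ i ∈ Sᶜ, ((Sᶜ \ {i}).card : ℝ) =
      (((Fintype.card α).choose m * (Fintype.card α - m) * (Fintype.card α - m - 1) : ℕ) : ℝ) := by
  have hcard : ∀ (S : Finset α) (i : α), ((Sᶜ \ {i}).card : ℝ) = ∑ _j ∈ Sᶜ \ {i}, (1 : ℝ) := by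
    simp
  simp only [hcard]
  rw [sum_congr rfl fun S hS => by
      rw [sum_compl_sum_sdiff_singleton_const, sum_const, card_compl, mem_powersetCard_univ.1 hS],
    sum_const, card_powersetCard, card_univ]
  simp only [nsmul_eq_mul, mul_one]
  push_cast
  ring

end SecondDifference

lemma sum_Icc_second_diff {R : Type*} [CommRing R] (a : ℕ → R) (u : ℕ) :
    ∑ s ∈ Icc 1 u, (a (s + 1) - 2 * a s + a (s - 1)) = a (u + 1) - a u - a 1 + a 0 := by
  induction u with
  | zero => simp
  | succ u ih =>
    rw [sum_Icc_succ_top (by omega), ih, Nat.add_sub_cancel]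
    ring

lemma sum_Icc_weighted_second_diff {R : Type*} [CommRing R] (a : ℕ → R) (u : ℕ) :
    ∑ s ∈ Icc 1 u, ((u : R) - s + 1) * (a (s + 1) - 2 * a s + a (s - 1)) =
      a (u + 1) - (u + 1) * a 1 + u * a 0 := by
  induction u with
  | zero => simp
  | succ u ih =>
    have hweight : ∀ s ∈ Icc 1 (u + 1),
        (((u + 1 : ℕ) : R) - s + 1) * (a (s + 1) - 2 * a s + a (s - 1)) =
          ((u : R) - s + 1) * (a (s + 1) - 2 * a s + a (s - 1)) +
            (a (s + 1) - 2 * a s + a (s - 1)) := fun s _ => by push_cast; ring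
    rw [sum_congr rfl hweight, sum_add_distrib, sum_Icc_second_diff,
      sum_Icc_succ_top (by omega), ih, Nat.add_sub_cancel]
    push_cast
    ring

lemma EX_const {n : ℕ} (c : ℝ) : EX (fun _ : Cube n => c) = c := by
  simp [EX]

lemma Ent_const {n : ℕ} (c : ℝ) : Ent (fun _ : Cube n => c) = 0 := by
  simp [Ent, EX_const]

lemma condE_empty {n : ℕ} (f : Cube n → ℝ) : condE f ∅ = fun _ => EX f := by
  funext x
  simp [condE, EX]

lemma EntC_empty {n : ℕ} (f : Cube n → ℝ) : EntC f ∅ = 0 := by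
  rw [EntC, condE_empty, Ent_const]

lemma tAvg_succ {n : ℕ} (f : Cube n → ℝ) {m : ℕ} (hm : m + 2 ≤ n) :
    tAvg f (m + 1) =
      layerAvg (EntC f) (m + 2) - 2 * layerAvg (EntC f) (m + 1) + layerAvg (EntC f) m := by
  have hD : n.choose m * (n - m) * (n - m - 1) ≠ 0 :=
    Nat.mul_ne_zero (Nat.mul_ne_zero (Nat.choose_pos (by omega)).ne' (by omega)) (by omega)
  rw [tAvg, Nat.add_sub_cancel, filter_card_eq_eq_powersetCard]
  simp only [Zfun]
  rw [sum_powersetCard_pairs_secondDiff, sum_powersetCard_pairs_card, Fintype.card_fin,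
    mul_div_cancel_left₀ _ (Nat.cast_ne_zero.2 hD)]

theorem stmt14_general {n : ℕ} (f : Cube n → ℝ)
    (u : ℕ) (hu : u + 1 ≤ n) :
    (∑ B ∈ (Finset.univ : Finset (Finset (Fin n))).filter (fun B => B.card = u + 1),
        EntC f B) / (Nat.choose n (u + 1) : ℝ) -
      ((u : ℝ) + 1) * ((∑ i : Fin n, EntC f {i}) / (n : ℝ)) =
      ∑ s ∈ Finset.Icc 1 u, ((u : ℝ) - (s : ℝ) + 1) * tAvg f s := by
  have ht : ∀ s ∈ Icc 1 u, tAvg f s =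
      layerAvg (EntC f) (s + 1) - 2 * layerAvg (EntC f) s + layerAvg (EntC f) (s - 1) := by
    intro s hs
    obtain ⟨hs1, hsu⟩ := mem_Icc.1 hs
    obtain ⟨m, rfl⟩ : ∃ m, s = m + 1 := ⟨s - 1, by omega⟩
    rw [Nat.add_sub_cancel]
    exact tAvg_succ f (by omega)
  calc _ = layerAvg (EntC f) (u + 1) - (u + 1) * layerAvg (EntC f) 1 := by
        rw [layerAvg_one, layerAvg, filter_card_eq_eq_powersetCard, Fintype.card_fin]
    _ = ∑ s ∈ Icc 1 u, ((u : ℝ) - s + 1) * (layerAvg (EntC f) (s + 1) -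
          2 * layerAvg (EntC f) s + layerAvg (EntC f) (s - 1)) := by
        rw [sum_Icc_weighted_second_diff, layerAvg_zero, EntC_empty]
        ring
    _ = _ := sum_congr rfl fun s hs => by rw [ht s hs]

/-- for nonnegative `f` and `0 ≤ u ≤ n-1`,
`E_{|B|=u+1} Ent(f|B) - (u+1) E_i Ent(f|{i}) = ∑_{s=1}^{u} (u-s+1) t_s`. -/
theorem stmt14 {n : ℕ} (f : Cube n → ℝ) (hf : ∀ x, 0 ≤ f x)
    (u : ℕ) (hu : u + 1 ≤ n) :
    (∑ B ∈ (Finset.univ : Finset (Finset (Fin n))).filter (fun B => B.card = u + 1),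
        EntC f B) / (Nat.choose n (u + 1) : ℝ) -
      ((u : ℝ) + 1) * ((∑ i : Fin n, EntC f {i}) / (n : ℝ)) =
      ∑ s ∈ Finset.Icc 1 u, ((u : ℝ) - (s : ℝ) + 1) * tAvg f s :=
  stmt14_general f u hu
end

section
/- Let x₁ ≥ x₂ ≥ … ≥ x_N ≥ 0 be nonnegative reals summing to 1. Define y_k = x_k² / (Σ_{i=1}^N x_i²) for k = 1,…,N. Then (y₁,…,y_N) majorizes (x₁,…,x_N): for every 1 ≤ t ≤ N, Σ_{k=1}^{t} y_k ≥ Σ_{k=1}^{t} x_k, with equality when t = N. -/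
open Finset

/-
Write `A, B` for the partial sums of `x` and `x²` up to `t` and `D, C` for the remaining ones.
Every `x_i` with `i < t` dominates every `x_j` with `j ≥ t`, so `x_i x_j (x_j - x_i) ≤ 0` termwise,
which sums to `A C ≤ B D`. Adding `A B` to both sides gives `A (B + C) ≤ B (A + D) = B`, i.e.
`A ≤ B / ∑ x_i²`.
-/

theorem sum_mul_sum_sq_le_sum_sq_mul_sum {ι : Type*} (s u : Finset ι) (x : ι → ℝ)
    (hu : ∀ j ∈ u, 0 ≤ x j) (hle : ∀ i ∈ s, ∀ j ∈ u, x j ≤ x i) :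
    (∑ i ∈ s, x i) * ∑ j ∈ u, x j ^ 2 ≤ (∑ i ∈ s, x i ^ 2) * ∑ j ∈ u, x j := by
  simp only [sum_mul_sum]
  refine sum_le_sum fun i hi => sum_le_sum fun j hj => ?_
  have hxj := hu j hj
  have hji := hle i hi j hj
  nlinarith [mul_nonneg (hxj.trans hji) hxj]

theorem sum_mul_sum_sq_le_sum_sq_mul_sum_of_subset {ι : Type*} [DecidableEq ι]
    {s v : Finset ι} (hsv : s ⊆ v) (x : ι → ℝ)
    (hnn : ∀ j ∈ v \ s, 0 ≤ x j) (hle : ∀ i ∈ s, ∀ j ∈ v \ s, x j ≤ x i) :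
    (∑ i ∈ s, x i) * ∑ j ∈ v, x j ^ 2 ≤ (∑ i ∈ s, x i ^ 2) * ∑ j ∈ v, x j := by
  rw [← sum_sdiff hsv, ← sum_sdiff hsv (f := x)]
  nlinarith [sum_mul_sum_sq_le_sum_sq_mul_sum s (v \ s) x hnn hle]

theorem sum_sq_pos_of_sum_ne_zero {ι : Type*} {s : Finset ι} {x : ι → ℝ}
    (h : ∑ i ∈ s, x i ≠ 0) : 0 < ∑ i ∈ s, x i ^ 2 := by
  refine (sum_nonneg fun i _ => sq_nonneg (x i)).lt_of_ne fun hzero => h ?_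
  have hsq := (sum_eq_zero_iff_of_nonneg fun i _ => sq_nonneg (x i)).mp hzero.symm
  exact sum_eq_zero fun i hi => pow_eq_zero_iff two_ne_zero |>.mp (hsq i hi)

theorem stmt16_general (N : ℕ) (x : ℕ → ℝ)
    (hnn : ∀ i, i < N → 0 ≤ x i)
    (hmono : ∀ i j, i ≤ j → j < N → x j ≤ x i)
    (hsum : ∑ i ∈ Finset.range N, x i = 1) :
    (∀ t, 1 ≤ t → t ≤ N →
        ∑ k ∈ Finset.range t, x k ≤
          ∑ k ∈ Finset.range t, x k ^ 2 / (∑ i ∈ Finset.range N, x i ^ 2)) ∧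
      ∑ k ∈ Finset.range N, x k ^ 2 / (∑ i ∈ Finset.range N, x i ^ 2) =
        ∑ k ∈ Finset.range N, x k := by
  have hS : 0 < ∑ i ∈ range N, x i ^ 2 :=
    sum_sq_pos_of_sum_ne_zero (hsum ▸ one_ne_zero)
  refine ⟨fun t _ htN => ?_, by rw [← sum_div, div_self hS.ne', hsum]⟩
  have tail_mem {j : ℕ} (hj : j ∈ range N \ range t) : t ≤ j ∧ j < N := by
    simp only [mem_sdiff, mem_range, not_lt] at hj
    exact hj.symm
  have key := sum_mul_sum_sq_le_sum_sq_mul_sum_of_subset (range_subset_range.mpr htN) x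
    (fun j hj => hnn j (tail_mem hj).2)
    (fun i hi j hj => hmono i j ((mem_range.mp hi).le.trans (tail_mem hj).1) (tail_mem hj).2)
  rw [hsum, mul_one] at key
  rwa [← sum_div, le_div_iff₀ hS]

/-- if `x₁ ≥ … ≥ x_N ≥ 0` sum to 1 and `y_k = x_k²/∑ x_i²`, then
`(y_k)` majorizes `(x_k)`: every partial sum of the `y`'s dominates that of the `x`'s,
with equality for the total sum. -/
theorem stmt16 (N : ℕ) (hN : 1 ≤ N) (x : ℕ → ℝ)
    (hnn : ∀ i, i < N → 0 ≤ x i)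
    (hmono : ∀ i j, i ≤ j → j < N → x j ≤ x i)
    (hsum : ∑ i ∈ Finset.range N, x i = 1) :
    (∀ t, 1 ≤ t → t ≤ N →
        ∑ k ∈ Finset.range t, x k ≤
          ∑ k ∈ Finset.range t, x k ^ 2 / (∑ i ∈ Finset.range N, x i ^ 2)) ∧
      ∑ k ∈ Finset.range N, x k ^ 2 / (∑ i ∈ Finset.range N, x i ^ 2) =
        ∑ k ∈ Finset.range N, x k :=
  stmt16_general N x hnn hmono hsum
end
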